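/- arXiv:0907.1789 — 4 statements merged into one kernel-verified Lean document; each statement's English description precedes it below -/
import Mathlib

section
/- Let T = (T*, T△) be a spherical latin bitrade and a = (a1,a2,a3) ∈ T*. Suppose b = (b1,b2,b3) ∈ T* and 1 ≤ i < j ≤ 3 are such that the point b̄ = (b̄2, b̄1) is not a vertex of Σ. Then there exists c = (c1,c2,c3) ∈ T△ such that Δ(c,a) does not degenerate, c̄_i = b̄_i and c̄_j = b̄_j. -/
open Function Set

variable {R C S : Type*} [DecidableEq R] [DecidableEq C] [DecidableEq S]

/-- Conditions (R1)-(R3) of a latin bitrade: `star` and `tri` are disjoint, and for every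
triple in one set and every pair of coordinates there is exactly one triple of the other
set agreeing in those two coordinates. -/
structure IsLatinBitrade (star tri : Finset (R × C × S)) : Prop where
  disj : Disjoint star tri
  r2a : ∀ p ∈ star, ∃! q, q ∈ tri ∧ q.1 = p.1 ∧ q.2.1 = p.2.1
  r2b : ∀ p ∈ star, ∃! q, q ∈ tri ∧ q.1 = p.1 ∧ q.2.2 = p.2.2
  r2c : ∀ p ∈ star, ∃! q, q ∈ tri ∧ q.2.1 = p.2.1 ∧ q.2.2 = p.2.2
  r3a : ∀ q ∈ tri, ∃! p, p ∈ star ∧ p.1 = q.1 ∧ p.2.1 = q.2.1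
  r3b : ∀ q ∈ tri, ∃! p, p ∈ star ∧ p.1 = q.1 ∧ p.2.2 = q.2.2
  r3c : ∀ q ∈ tri, ∃! p, p ∈ star ∧ p.2.1 = q.2.1 ∧ p.2.2 = q.2.2

/-- A latin bitrade is indecomposable if it is not the disjoint union of two
nonempty latin bitrades. -/
def BitradeIndecomposable (star tri : Finset (R × C × S)) : Prop :=
  ¬ ∃ s₁ t₁ s₂ t₂ : Finset (R × C × S),
      s₁.Nonempty ∧ s₂.Nonempty ∧ Disjoint s₁ s₂ ∧ Disjoint t₁ t₂ ∧
      s₁ ∪ s₂ = star ∧ t₁ ∪ t₂ = tri ∧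
      IsLatinBitrade s₁ t₁ ∧ IsLatinBitrade s₂ t₂

/-- An indecomposable latin bitrade is spherical if `m = s + 2`, where `m` is the total
number of occurring rows, columns and symbols and `s` is the size. -/
def IsSphericalBitrade (star tri : Finset (R × C × S)) : Prop :=
  IsLatinBitrade star tri ∧ BitradeIndecomposable star tri ∧
    (star.image Prod.fst).card + (star.image fun p => p.2.1).card +
      (star.image fun p => p.2.2).card = star.card + 2

/-- `(f1, f2, f3)` is a (rational) solution of the linear system `Eq(T,a)`:
`a₁ = 0`, `a₂ = 0`, `a₃ = 1`, and `b₁ + b₂ = b₃` for every `b ∈ T* \ {a}`. -/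
def IsEqSolution (star : Finset (R × C × S)) (a : R × C × S)
    (f1 : R → ℚ) (f2 : C → ℚ) (f3 : S → ℚ) : Prop :=
  f1 a.1 = 0 ∧ f2 a.2.1 = 0 ∧ f3 a.2.2 = 1 ∧
    ∀ b ∈ star, b ≠ a → f1 b.1 + f2 b.2.1 = f3 b.2.2

/-- The solution is separated: two rows (columns, symbols) receiving the same value coincide. -/
def SeparatedSolution (star : Finset (R × C × S))
    (f1 : R → ℚ) (f2 : C → ℚ) (f3 : S → ℚ) : Prop :=
  ∀ b ∈ star, ∀ d ∈ star,
    (f1 b.1 = f1 d.1 → b.1 = d.1) ∧ (f2 b.2.1 = f2 d.2.1 → b.2.1 = d.2.1) ∧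
      (f3 b.2.2 = f3 d.2.2 → b.2.2 = d.2.2)

/-- The triangle `Σ = {(x,y) : 0 ≤ x, 0 ≤ y, x + y ≤ 1}`. -/
def SigmaT : Set (ℝ × ℝ) := {p | 0 ≤ p.1 ∧ 0 ≤ p.2 ∧ p.1 + p.2 ≤ 1}

/-- The (closed) triangle bounded by the lines `y = r1`, `x = r2` and `x + y = r3`.
If `r1 + r2 = r3` this set degenerates to the single point `(r2, r1)`. -/
def DeltaT (r1 r2 r3 : ℚ) : Set (ℝ × ℝ) :=
  {p | ((r1 : ℝ) ≤ p.2 ∧ (r2 : ℝ) ≤ p.1 ∧ p.1 + p.2 ≤ (r3 : ℝ)) ∨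
       (p.2 ≤ (r1 : ℝ) ∧ p.1 ≤ (r2 : ℝ) ∧ (r3 : ℝ) ≤ p.1 + p.2)}

/-- The triangle bounded by `y = r1`, `x = r2`, `x + y = r3` degenerates:
the three lines meet in a single point. -/
def DeltaDegenerate (r1 r2 r3 : ℚ) : Prop := r1 + r2 = r3

/-- The three pairwise intersection points of the lines `y = r1`, `x = r2`, `x + y = r3`,
i.e. the vertices of the triangle they bound. -/
def DeltaVerts (r1 r2 r3 : ℚ) : Set (ℝ × ℝ) :=
  {((r2 : ℝ), (r1 : ℝ)), ((r3 : ℝ) - (r1 : ℝ), (r1 : ℝ)), ((r2 : ℝ), (r3 : ℝ) - (r2 : ℝ))}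

/-- The horizontal side (upon the line `y = r1`) of the triangle bounded by
`y = r1`, `x = r2`, `x + y = r3`. -/
def sideH (r1 r2 r3 : ℚ) : Set (ℝ × ℝ) :=
  segment ℝ ((r2 : ℝ), (r1 : ℝ)) ((r3 : ℝ) - (r1 : ℝ), (r1 : ℝ))

/-- The vertical side (upon the line `x = r2`). -/
def sideV (r1 r2 r3 : ℚ) : Set (ℝ × ℝ) :=
  segment ℝ ((r2 : ℝ), (r1 : ℝ)) ((r2 : ℝ), (r3 : ℝ) - (r2 : ℝ))

/-- The diagonal side (upon the line `x + y = r3`). -/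
def sideD (r1 r2 r3 : ℚ) : Set (ℝ × ℝ) :=
  segment ℝ ((r3 : ℝ) - (r1 : ℝ), (r1 : ℝ)) ((r2 : ℝ), (r3 : ℝ) - (r2 : ℝ))

/-- The triangle `Δ(c,a)` associated with a triple `c` and the solution `(f1,f2,f3)`. -/
def DeltaOf (f1 : R → ℚ) (f2 : C → ℚ) (f3 : S → ℚ) (c : R × C × S) : Set (ℝ × ℝ) :=
  DeltaT (f1 c.1) (f2 c.2.1) (f3 c.2.2)

/-- The value assigned by the solution `(f1,f2,f3)` to the `i`-th coordinate of a triple. -/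
def coordVal (f1 : R → ℚ) (f2 : C → ℚ) (f3 : S → ℚ) (p : R × C × S) : Fin 3 → ℚ :=
  ![f1 p.1, f2 p.2.1, f3 p.2.2]


private lemma card_le_of_mate {α : Type*} [DecidableEq α] (Y X : Finset α)
    (sh : α → α → Prop)
    (hmate : ∀ p ∈ Y, ∃ q ∈ X, sh q p)
    (huni : ∀ q ∈ X, ∀ p ∈ Y, ∀ p' ∈ Y, sh q p → sh q p' → p = p') :
    Y.card ≤ X.card := by
  classical
  refine Finset.card_le_card_of_injOn
    (fun p => if h : ∃ q ∈ X, sh q p then h.choose else p) ?_ ?_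
  · intro p hp
    simp only [dif_pos (hmate p hp)]
    exact (hmate p hp).choose_spec.1
  · intro p hp p' hp' hpp
    simp only [dif_pos (hmate p (Finset.mem_coe.1 hp)),
      dif_pos (hmate p' (Finset.mem_coe.1 hp'))] at hpp
    have h1 := (hmate p (Finset.mem_coe.1 hp)).choose_spec
    have h2 := (hmate p' (Finset.mem_coe.1 hp')).choose_spec
    rw [← hpp] at h2
    exact huni _ h1.1 p (Finset.mem_coe.1 hp) p' (Finset.mem_coe.1 hp') h1.2 h2.2

private lemma mate_surj {α : Type*} [DecidableEq α] (Y X : Finset α)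
    (sh : α → α → Prop)
    (hmate : ∀ q ∈ X, ∃ p ∈ Y, sh q p)
    (huni : ∀ p ∈ Y, ∀ q ∈ X, ∀ q' ∈ X, sh q p → sh q' p → q = q')
    (hcard : Y.card ≤ X.card) :
    ∀ p ∈ Y, ∃ q ∈ X, sh q p := by
  classical
  have hsurj := Finset.surj_on_of_inj_on_of_card_le
    (s := X) (t := Y) (fun q _ => if h : ∃ p ∈ Y, sh q p then h.choose else q)
    ?_ ?_ hcard
  · intro p hp
    obtain ⟨q, hq, he⟩ := hsurj p hp
    simp only [dif_pos (hmate q hq)] at he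
    have := (hmate q hq).choose_spec
    rw [← he] at this
    exact ⟨q, hq, this.2⟩
  · intro q hq
    simp only [dif_pos (hmate q hq)]
    exact (hmate q hq).choose_spec.1
  · intro q q' hq hq' he
    simp only [dif_pos (hmate q hq), dif_pos (hmate q' hq')] at he
    have h1 := (hmate q hq).choose_spec
    have h2 := (hmate q' hq').choose_spec
    rw [← he] at h2
    exact huni _ h1.1 q hq q' hq' h1.2 h2.2

private lemma subEU {α : Type*} {T X : Finset α} (hXT : X ⊆ T) {sh : α → Prop}
    (hglob : ∃! q, q ∈ T ∧ sh q) (hex : ∃ q ∈ X, sh q) :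
    ∃! q, q ∈ X ∧ sh q := by
  obtain ⟨q, hq, hsh⟩ := hex
  obtain ⟨q0, _, hu⟩ := hglob
  refine ⟨q, ⟨hq, hsh⟩, fun y hy => ?_⟩
  rw [hu y ⟨hXT hy.1, hy.2⟩, ← hu q ⟨hXT hq, hsh⟩]

private lemma subEUc {α : Type*} [DecidableEq α] {T X : Finset α} {sh : α → Prop}
    (hglob : ∃! q, q ∈ T ∧ sh q) (hnot : ∀ q ∈ X, ¬ sh q) :
    ∃! q, q ∈ T \ X ∧ sh q := by
  obtain ⟨q, ⟨hqT, hsh⟩, hu⟩ := hglob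
  refine ⟨q, ⟨Finset.mem_sdiff.2 ⟨hqT, fun hqX => hnot q hqX hsh⟩, hsh⟩, fun y hy => ?_⟩
  exact hu y ⟨(Finset.mem_sdiff.1 hy.1).1, hy.2⟩

/-- **Lemma 2.2.** If `b̄` is not a vertex of `Σ`, then for every `i < j` there is a
triple `c ∈ T△` with `Δ(c,a)` nondegenerate agreeing with `b` in the `i`-th and `j`-th
line values. -/
theorem stmt1 (star tri : Finset (R × C × S)) (hsph : IsSphericalBitrade star tri)
    (a : R × C × S) (ha : a ∈ star)
    (f1 : R → ℚ) (f2 : C → ℚ) (f3 : S → ℚ)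
    (hsol : IsEqSolution star a f1 f2 f3)
    (b : R × C × S) (hb : b ∈ star)
    (hvert : (((f2 b.2.1 : ℝ), (f1 b.1 : ℝ)) : ℝ × ℝ) ∉
      ({((0 : ℝ), (0 : ℝ)), ((1 : ℝ), (0 : ℝ)), ((0 : ℝ), (1 : ℝ))} : Set (ℝ × ℝ)))
    (i j : Fin 3) (hij : i < j) :
    ∃ c ∈ tri, ¬ DeltaDegenerate (f1 c.1) (f2 c.2.1) (f3 c.2.2) ∧
      coordVal f1 f2 f3 c i = coordVal f1 f2 f3 b i ∧
      coordVal f1 f2 f3 c j = coordVal f1 f2 f3 b j := by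
  classical
  obtain ⟨hlb, hind, -⟩ := hsph
  simp only [Set.mem_insert_iff, Set.mem_singleton_iff, Prod.mk.injEq, not_or] at hvert
  obtain ⟨hw1, hw2, hw3⟩ := hvert
  have hn1 : ¬(f1 b.1 = 0 ∧ f2 b.2.1 = 0) := by
    rintro ⟨h1, h2⟩; exact hw1 ⟨by exact_mod_cast h2, by exact_mod_cast h1⟩
  have hn2 : ¬(f1 b.1 = 0 ∧ f2 b.2.1 = 1) := by
    rintro ⟨h1, h2⟩; exact hw2 ⟨by exact_mod_cast h2, by exact_mod_cast h1⟩
  have hn3 : ¬(f1 b.1 = 1 ∧ f2 b.2.1 = 0) := by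
    rintro ⟨h1, h2⟩; exact hw3 ⟨by exact_mod_cast h2, by exact_mod_cast h1⟩
  have hba : b ≠ a := by
    intro h; exact hn1 ⟨by rw [h]; exact hsol.1, by rw [h]; exact hsol.2.1⟩
  have hv3 : f1 b.1 + f2 b.2.1 = f3 b.2.2 := hsol.2.2.2 b hb hba
  by_contra hgoal
  push_neg at hgoal
  set P : R × C × S → Prop :=
    fun p => f1 p.1 = f1 b.1 ∧ f2 p.2.1 = f2 b.2.1 ∧ f3 p.2.2 = f3 b.2.2 with hP
  set Y : Finset (R × C × S) := star.filter P with hYdef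
  set X : Finset (R × C × S) := tri.filter P with hXdef
  have hYmem : ∀ p, p ∈ Y ↔ p ∈ star ∧ P p := by
    intro p; rw [hYdef]; exact Finset.mem_filter
  have hXmem : ∀ p, p ∈ X ↔ p ∈ tri ∧ P p := by
    intro p; rw [hXdef]; exact Finset.mem_filter
  have hYs : Y ⊆ star := by rw [hYdef]; exact Finset.filter_subset _ _
  have hXt : X ⊆ tri := by rw [hXdef]; exact Finset.filter_subset _ _
  -- any star element matching the values of `b` in two coordinates matches in all three
  have hmS : ∀ p ∈ star,
      ((f1 p.1 = f1 b.1 ∧ f2 p.2.1 = f2 b.2.1) ∨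
       (f1 p.1 = f1 b.1 ∧ f3 p.2.2 = f3 b.2.2) ∨
       (f2 p.2.1 = f2 b.2.1 ∧ f3 p.2.2 = f3 b.2.2)) → P p := by
    intro p hps hd
    by_cases hpa : p = a
    · subst hpa
      obtain ⟨e1, e2, e3, -⟩ := hsol
      rcases hd with ⟨h1, h2⟩ | ⟨h1, h2⟩ | ⟨h1, h2⟩
      · exact absurd ⟨h1.symm.trans e1, h2.symm.trans e2⟩ hn1
      · have hb1 : f1 b.1 = 0 := h1.symm.trans e1
        have hb3 : f3 b.2.2 = 1 := h2.symm.trans e3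
        exact absurd ⟨hb1, by linarith⟩ hn2
      · have hb2 : f2 b.2.1 = 0 := h1.symm.trans e2
        have hb3 : f3 b.2.2 = 1 := h2.symm.trans e3
        exact absurd ⟨by linarith, hb2⟩ hn3
    · have heq := hsol.2.2.2 p hps hpa
      rcases hd with ⟨h1, h2⟩ | ⟨h1, h2⟩ | ⟨h1, h2⟩
      · exact ⟨h1, h2, by linarith⟩
      · exact ⟨h1, by linarith, h2⟩
      · exact ⟨by linarith, h1, h2⟩
  -- star-mates of members of X lie in Y (for each of the three coordinate pairs)
  have hB1 : ∀ q ∈ X, ∃ p ∈ Y, q.1 = p.1 ∧ q.2.1 = p.2.1 := by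
    intro q hq
    obtain ⟨hqt, hPq⟩ := (hXmem q).1 hq
    obtain ⟨p, ⟨hps, e1, e2⟩, -⟩ := hlb.r3a q hqt
    refine ⟨p, (hYmem p).2 ⟨hps, hmS p hps (Or.inl ⟨?_, ?_⟩)⟩, e1.symm, e2.symm⟩
    · rw [e1]; exact hPq.1
    · rw [e2]; exact hPq.2.1
  have hB2 : ∀ q ∈ X, ∃ p ∈ Y, q.1 = p.1 ∧ q.2.2 = p.2.2 := by
    intro q hq
    obtain ⟨hqt, hPq⟩ := (hXmem q).1 hq
    obtain ⟨p, ⟨hps, e1, e2⟩, -⟩ := hlb.r3b q hqt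
    refine ⟨p, (hYmem p).2 ⟨hps, hmS p hps (Or.inr (Or.inl ⟨?_, ?_⟩))⟩, e1.symm, e2.symm⟩
    · rw [e1]; exact hPq.1
    · rw [e2]; exact hPq.2.2
  have hB3 : ∀ q ∈ X, ∃ p ∈ Y, q.2.1 = p.2.1 ∧ q.2.2 = p.2.2 := by
    intro q hq
    obtain ⟨hqt, hPq⟩ := (hXmem q).1 hq
    obtain ⟨p, ⟨hps, e1, e2⟩, -⟩ := hlb.r3c q hqt
    refine ⟨p, (hYmem p).2 ⟨hps, hmS p hps (Or.inr (Or.inr ⟨?_, ?_⟩))⟩, e1.symm, e2.symm⟩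
    · rw [e1]; exact hPq.2.1
    · rw [e2]; exact hPq.2.2
  -- uniqueness facts
  have hU1 : ∀ q ∈ X, ∀ p ∈ Y, ∀ p' ∈ Y, (q.1 = p.1 ∧ q.2.1 = p.2.1) →
      (q.1 = p'.1 ∧ q.2.1 = p'.2.1) → p = p' := by
    intro q hq p hp p' hp' h h'
    obtain ⟨p0, -, hu⟩ := hlb.r3a q (hXt hq)
    rw [hu p ⟨hYs hp, h.1.symm, h.2.symm⟩, hu p' ⟨hYs hp', h'.1.symm, h'.2.symm⟩]
  have hU2 : ∀ q ∈ X, ∀ p ∈ Y, ∀ p' ∈ Y, (q.1 = p.1 ∧ q.2.2 = p.2.2) →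
      (q.1 = p'.1 ∧ q.2.2 = p'.2.2) → p = p' := by
    intro q hq p hp p' hp' h h'
    obtain ⟨p0, -, hu⟩ := hlb.r3b q (hXt hq)
    rw [hu p ⟨hYs hp, h.1.symm, h.2.symm⟩, hu p' ⟨hYs hp', h'.1.symm, h'.2.symm⟩]
  have hU3 : ∀ q ∈ X, ∀ p ∈ Y, ∀ p' ∈ Y, (q.2.1 = p.2.1 ∧ q.2.2 = p.2.2) →
      (q.2.1 = p'.2.1 ∧ q.2.2 = p'.2.2) → p = p' := by
    intro q hq p hp p' hp' h h'
    obtain ⟨p0, -, hu⟩ := hlb.r3c q (hXt hq)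
    rw [hu p ⟨hYs hp, h.1.symm, h.2.symm⟩, hu p' ⟨hYs hp', h'.1.symm, h'.2.symm⟩]
  have hV1 : ∀ p ∈ Y, ∀ q ∈ X, ∀ q' ∈ X, (q.1 = p.1 ∧ q.2.1 = p.2.1) →
      (q'.1 = p.1 ∧ q'.2.1 = p.2.1) → q = q' := by
    intro p hp q hq q' hq' h h'
    obtain ⟨q0, -, hu⟩ := hlb.r2a p (hYs hp)
    rw [hu q ⟨hXt hq, h⟩, hu q' ⟨hXt hq', h'⟩]
  have hV2 : ∀ p ∈ Y, ∀ q ∈ X, ∀ q' ∈ X, (q.1 = p.1 ∧ q.2.2 = p.2.2) →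
      (q'.1 = p.1 ∧ q'.2.2 = p.2.2) → q = q' := by
    intro p hp q hq q' hq' h h'
    obtain ⟨q0, -, hu⟩ := hlb.r2b p (hYs hp)
    rw [hu q ⟨hXt hq, h⟩, hu q' ⟨hXt hq', h'⟩]
  have hV3 : ∀ p ∈ Y, ∀ q ∈ X, ∀ q' ∈ X, (q.2.1 = p.2.1 ∧ q.2.2 = p.2.2) →
      (q'.2.1 = p.2.1 ∧ q'.2.2 = p.2.2) → q = q' := by
    intro p hp q hq q' hq' h h'
    obtain ⟨q0, -, hu⟩ := hlb.r2c p (hYs hp)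
    rw [hu q ⟨hXt hq, h⟩, hu q' ⟨hXt hq', h'⟩]
  -- the tri-mate of each member of Y (for the pair (i,j)) lies in X, hence |Y| ≤ |X|
  have hcard : Y.card ≤ X.card := by
    fin_cases i <;> fin_cases j <;> try exact absurd hij (by decide)
    · -- i = 0, j = 1
      refine card_le_of_mate Y X (fun q p => q.1 = p.1 ∧ q.2.1 = p.2.1) ?_ hU1
      intro p hp
      obtain ⟨hps, hPp⟩ := (hYmem p).1 hp
      obtain ⟨q, ⟨hqt, e1, e2⟩, -⟩ := hlb.r2a p hps
      have h1 : f1 q.1 = f1 b.1 := by rw [e1]; exact hPp.1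
      have h2 : f2 q.2.1 = f2 b.2.1 := by rw [e2]; exact hPp.2.1
      have hdeg : f1 q.1 + f2 q.2.1 = f3 q.2.2 := by
        by_contra hnd
        exact hgoal q hqt hnd (by simpa [coordVal] using h1) (by simpa [coordVal] using h2)
      exact ⟨q, (hXmem q).2 ⟨hqt, h1, h2, by linarith⟩, e1, e2⟩
    · -- i = 0, j = 2
      refine card_le_of_mate Y X (fun q p => q.1 = p.1 ∧ q.2.2 = p.2.2) ?_ hU2
      intro p hp
      obtain ⟨hps, hPp⟩ := (hYmem p).1 hp
      obtain ⟨q, ⟨hqt, e1, e2⟩, -⟩ := hlb.r2b p hps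
      have h1 : f1 q.1 = f1 b.1 := by rw [e1]; exact hPp.1
      have h2 : f3 q.2.2 = f3 b.2.2 := by rw [e2]; exact hPp.2.2
      have hdeg : f1 q.1 + f2 q.2.1 = f3 q.2.2 := by
        by_contra hnd
        exact hgoal q hqt hnd (by simpa [coordVal] using h1) (by simpa [coordVal] using h2)
      exact ⟨q, (hXmem q).2 ⟨hqt, h1, by linarith, h2⟩, e1, e2⟩
    · -- i = 1, j = 2
      refine card_le_of_mate Y X (fun q p => q.2.1 = p.2.1 ∧ q.2.2 = p.2.2) ?_ hU3
      intro p hp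
      obtain ⟨hps, hPp⟩ := (hYmem p).1 hp
      obtain ⟨q, ⟨hqt, e1, e2⟩, -⟩ := hlb.r2c p hps
      have h1 : f2 q.2.1 = f2 b.2.1 := by rw [e1]; exact hPp.2.1
      have h2 : f3 q.2.2 = f3 b.2.2 := by rw [e2]; exact hPp.2.2
      have hdeg : f1 q.1 + f2 q.2.1 = f3 q.2.2 := by
        by_contra hnd
        exact hgoal q hqt hnd (by simpa [coordVal] using h1) (by simpa [coordVal] using h2)
      exact ⟨q, (hXmem q).2 ⟨hqt, by linarith, h1, h2⟩, e1, e2⟩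
  -- hence the tri-mates of members of Y lie in X for ALL coordinate pairs
  have hA1 := mate_surj Y X (fun q p => q.1 = p.1 ∧ q.2.1 = p.2.1) hB1 hV1 hcard
  have hA2 := mate_surj Y X (fun q p => q.1 = p.1 ∧ q.2.2 = p.2.2) hB2 hV2 hcard
  have hA3 := mate_surj Y X (fun q p => q.2.1 = p.2.1 ∧ q.2.2 = p.2.2) hB3 hV3 hcard
  -- (Y, X) is a latin bitrade
  have bit1 : IsLatinBitrade Y X := by
    refine ⟨?_, ?_, ?_, ?_, ?_, ?_, ?_⟩
    · rw [hYdef, hXdef]; exact Finset.disjoint_filter_filter hlb.disj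
    · intro p hp; exact subEU hXt (hlb.r2a p (hYs hp)) (hA1 p hp)
    · intro p hp; exact subEU hXt (hlb.r2b p (hYs hp)) (hA2 p hp)
    · intro p hp; exact subEU hXt (hlb.r2c p (hYs hp)) (hA3 p hp)
    · intro q hq
      obtain ⟨p, hp, e1, e2⟩ := hB1 q hq
      exact subEU hYs (hlb.r3a q (hXt hq)) ⟨p, hp, e1.symm, e2.symm⟩
    · intro q hq
      obtain ⟨p, hp, e1, e2⟩ := hB2 q hq
      exact subEU hYs (hlb.r3b q (hXt hq)) ⟨p, hp, e1.symm, e2.symm⟩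
    · intro q hq
      obtain ⟨p, hp, e1, e2⟩ := hB3 q hq
      exact subEU hYs (hlb.r3c q (hXt hq)) ⟨p, hp, e1.symm, e2.symm⟩
  -- the complement is a latin bitrade as well
  have bit2 : IsLatinBitrade (star \ Y) (tri \ X) := by
    refine ⟨?_, ?_, ?_, ?_, ?_, ?_, ?_⟩
    · exact Finset.disjoint_of_subset_left Finset.sdiff_subset
        (Finset.disjoint_of_subset_right Finset.sdiff_subset hlb.disj)
    · intro p hp
      obtain ⟨hps, hpY⟩ := Finset.mem_sdiff.1 hp
      refine subEUc (hlb.r2a p hps) ?_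
      rintro q hq ⟨e1, e2⟩
      obtain ⟨p', hp', g1, g2⟩ := hB1 q hq
      obtain ⟨p0, -, hu⟩ := hlb.r3a q (hXt hq)
      have hpp : p = p' := by
        rw [hu p ⟨hps, e1.symm, e2.symm⟩, hu p' ⟨hYs hp', g1.symm, g2.symm⟩]
      exact hpY (hpp ▸ hp')
    · intro p hp
      obtain ⟨hps, hpY⟩ := Finset.mem_sdiff.1 hp
      refine subEUc (hlb.r2b p hps) ?_
      rintro q hq ⟨e1, e2⟩
      obtain ⟨p', hp', g1, g2⟩ := hB2 q hq
      obtain ⟨p0, -, hu⟩ := hlb.r3b q (hXt hq)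
      have hpp : p = p' := by
        rw [hu p ⟨hps, e1.symm, e2.symm⟩, hu p' ⟨hYs hp', g1.symm, g2.symm⟩]
      exact hpY (hpp ▸ hp')
    · intro p hp
      obtain ⟨hps, hpY⟩ := Finset.mem_sdiff.1 hp
      refine subEUc (hlb.r2c p hps) ?_
      rintro q hq ⟨e1, e2⟩
      obtain ⟨p', hp', g1, g2⟩ := hB3 q hq
      obtain ⟨p0, -, hu⟩ := hlb.r3c q (hXt hq)
      have hpp : p = p' := by
        rw [hu p ⟨hps, e1.symm, e2.symm⟩, hu p' ⟨hYs hp', g1.symm, g2.symm⟩]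
      exact hpY (hpp ▸ hp')
    · intro q hq
      obtain ⟨hqt, hqX⟩ := Finset.mem_sdiff.1 hq
      refine subEUc (hlb.r3a q hqt) ?_
      rintro p hp ⟨e1, e2⟩
      obtain ⟨q', hq', g1, g2⟩ := hA1 p hp
      obtain ⟨q0, -, hu⟩ := hlb.r2a p (hYs hp)
      have hqq : q = q' := by
        rw [hu q ⟨hqt, e1.symm, e2.symm⟩, hu q' ⟨hXt hq', g1, g2⟩]
      exact hqX (hqq ▸ hq')
    · intro q hq
      obtain ⟨hqt, hqX⟩ := Finset.mem_sdiff.1 hq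
      refine subEUc (hlb.r3b q hqt) ?_
      rintro p hp ⟨e1, e2⟩
      obtain ⟨q', hq', g1, g2⟩ := hA2 p hp
      obtain ⟨q0, -, hu⟩ := hlb.r2b p (hYs hp)
      have hqq : q = q' := by
        rw [hu q ⟨hqt, e1.symm, e2.symm⟩, hu q' ⟨hXt hq', g1, g2⟩]
      exact hqX (hqq ▸ hq')
    · intro q hq
      obtain ⟨hqt, hqX⟩ := Finset.mem_sdiff.1 hq
      refine subEUc (hlb.r3c q hqt) ?_
      rintro p hp ⟨e1, e2⟩
      obtain ⟨q', hq', g1, g2⟩ := hA3 p hp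
      obtain ⟨q0, -, hu⟩ := hlb.r2c p (hYs hp)
      have hqq : q = q' := by
        rw [hu q ⟨hqt, e1.symm, e2.symm⟩, hu q' ⟨hXt hq', g1, g2⟩]
      exact hqX (hqq ▸ hq')
  -- contradiction with indecomposability
  refine hind ⟨Y, X, star \ Y, tri \ X, ⟨b, (hYmem b).2 ⟨hb, rfl, rfl, rfl⟩⟩,
    ⟨a, Finset.mem_sdiff.2 ⟨ha, fun haY => ?_⟩⟩, Finset.disjoint_sdiff,
    Finset.disjoint_sdiff, Finset.union_sdiff_of_subset hYs,
    Finset.union_sdiff_of_subset hXt, bit1, bit2⟩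
  obtain ⟨-, hPa⟩ := (hYmem a).1 haY
  exact hn1 ⟨hPa.1.symm.trans hsol.1, hPa.2.1.symm.trans hsol.2.1⟩
end

section
/- Let T = (T*, T△) be a spherical latin bitrade and a = (a1,a2,a3) ∈ T*. Then for every c = (c1,c2,c3) ∈ T△ the triangle Δ(c,a) is contained in the triangle Σ. -/
open Function Set

variable {R C S : Type*} [DecidableEq R] [DecidableEq C] [DecidableEq S]

section BitradeAux

variable {R C S : Type*} [DecidableEq R] [DecidableEq C] [DecidableEq S]

lemma key_nonneg (star tri : Finset (R × C × S)) (hlb : IsLatinBitrade star tri)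
    (hind : BitradeIndecomposable star tri) (a : R × C × S) (ha : a ∈ star)
    (f1 : R → ℚ) (f2 : C → ℚ) (f3 : S → ℚ) (hsol : IsEqSolution star a f1 f2 f3) :
    ∀ b ∈ star, 0 ≤ f1 b.1 := by
  classical
  obtain ⟨h0, h0', h1, heq⟩ := hsol
  by_contra hcon
  push_neg at hcon
  obtain ⟨w, hw, hwneg⟩ := hcon
  set μ : ℚ := (star.image (fun p => f1 p.1)).min'
      ⟨f1 a.1, Finset.mem_image_of_mem _ ha⟩ with hμdef
  have hμle : ∀ p ∈ star, μ ≤ f1 p.1 := fun p hp =>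
    Finset.min'_le _ _ (Finset.mem_image_of_mem _ hp)
  have hμneg : μ < 0 := lt_of_le_of_lt (hμle w hw) hwneg
  obtain ⟨b₀, hb₀, hb₀μ⟩ : ∃ p ∈ star, f1 p.1 = μ := by
    obtain ⟨x, hx, hxeq⟩ := Finset.mem_image.mp
      (Finset.min'_mem (star.image (fun p => f1 p.1))
        ⟨f1 a.1, Finset.mem_image_of_mem _ ha⟩)
    exact ⟨x, hx, hxeq⟩
  -- any star element with row value μ is distinct from a
  have hne_a : ∀ p : R × C × S, f1 p.1 = μ → p ≠ a := by
    intro p hp heqa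
    rw [heqa, h0] at hp
    exact absurd hp.symm (ne_of_lt hμneg)
  -- mate functions
  set g2a : R × C × S → R × C × S :=
    fun p => if hp : p ∈ star then (hlb.r2a p hp).exists.choose else p with hg2adef
  have hg2a : ∀ p ∈ star, g2a p ∈ tri ∧ (g2a p).1 = p.1 ∧ (g2a p).2.1 = p.2.1 := by
    intro p hp
    simp only [hg2adef, dif_pos hp]
    exact (hlb.r2a p hp).exists.choose_spec
  have hg2a_uniq : ∀ p ∈ star, ∀ q, q ∈ tri → q.1 = p.1 → q.2.1 = p.2.1 → q = g2a p := by
    intro p hp q hq h1' h2'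
    obtain ⟨q', hq', huq⟩ := hlb.r2a p hp
    have e1 := huq q ⟨hq, h1', h2'⟩
    have e2 := huq (g2a p) ⟨(hg2a p hp).1, (hg2a p hp).2.1, (hg2a p hp).2.2⟩
    rw [e1, e2]
  set g2b : R × C × S → R × C × S :=
    fun p => if hp : p ∈ star then (hlb.r2b p hp).exists.choose else p with hg2bdef
  have hg2b : ∀ p ∈ star, g2b p ∈ tri ∧ (g2b p).1 = p.1 ∧ (g2b p).2.2 = p.2.2 := by
    intro p hp
    simp only [hg2bdef, dif_pos hp]
    exact (hlb.r2b p hp).exists.choose_spec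
  have hg2b_uniq : ∀ p ∈ star, ∀ q, q ∈ tri → q.1 = p.1 → q.2.2 = p.2.2 → q = g2b p := by
    intro p hp q hq h1' h2'
    obtain ⟨q', hq', huq⟩ := hlb.r2b p hp
    rw [huq q ⟨hq, h1', h2'⟩, huq (g2b p) ⟨(hg2b p hp).1, (hg2b p hp).2.1, (hg2b p hp).2.2⟩]
  set g3c : R × C × S → R × C × S :=
    fun c => if hc : c ∈ tri then (hlb.r3c c hc).exists.choose else c with hg3cdef
  have hg3c : ∀ c ∈ tri, g3c c ∈ star ∧ (g3c c).2.1 = c.2.1 ∧ (g3c c).2.2 = c.2.2 := by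
    intro c hc
    simp only [hg3cdef, dif_pos hc]
    exact (hlb.r3c c hc).exists.choose_spec
  have hg3c_uniq : ∀ c ∈ tri, ∀ p, p ∈ star → p.2.1 = c.2.1 → p.2.2 = c.2.2 → p = g3c c := by
    intro c hc p hp h1' h2'
    obtain ⟨p', hp', hup⟩ := hlb.r3c c hc
    rw [hup p ⟨hp, h1', h2'⟩, hup (g3c c) ⟨(hg3c c hc).1, (hg3c c hc).2.1, (hg3c c hc).2.2⟩]
  -- the filtered sets
  set S₁ : Finset (R × C × S) := star.filter (fun p => f1 p.1 = μ) with hS₁def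
  set T₁ : Finset (R × C × S) := tri.filter (fun p => f1 p.1 = μ) with hT₁def
  set U : Finset (R × C × S) := tri.filter (fun p => f3 p.2.2 - f2 p.2.1 = μ) with hUdef
  have hS₁star : ∀ p ∈ S₁, p ∈ star := fun p hp => (Finset.mem_filter.mp hp).1
  have hS₁μ : ∀ p ∈ S₁, f1 p.1 = μ := fun p hp => (Finset.mem_filter.mp hp).2
  have hT₁tri : ∀ c ∈ T₁, c ∈ tri := fun c hc => (Finset.mem_filter.mp hc).1
  have hT₁μ : ∀ c ∈ T₁, f1 c.1 = μ := fun c hc => (Finset.mem_filter.mp hc).2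
  -- image facts
  have hT1a : T₁ = S₁.image g2a := by
    apply Finset.Subset.antisymm
    · intro c hc
      obtain ⟨hc', hcμ⟩ := Finset.mem_filter.mp hc
      obtain ⟨p, ⟨hp, hpr, hpc⟩, _⟩ := hlb.r3a c hc'
      have hpS : p ∈ S₁ := Finset.mem_filter.mpr ⟨hp, by rw [hpr]; exact hcμ⟩
      have : c = g2a p := hg2a_uniq p hp c hc' hpr.symm hpc.symm
      exact Finset.mem_image.mpr ⟨p, hpS, this.symm⟩
    · intro c hc
      obtain ⟨p, hpS, rfl⟩ := Finset.mem_image.mp hc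
      have hp := hS₁star p hpS
      exact Finset.mem_filter.mpr ⟨(hg2a p hp).1, by rw [(hg2a p hp).2.1]; exact hS₁μ p hpS⟩
  have hT1b : T₁ = S₁.image g2b := by
    apply Finset.Subset.antisymm
    · intro c hc
      obtain ⟨hc', hcμ⟩ := Finset.mem_filter.mp hc
      obtain ⟨p, ⟨hp, hpr, hps⟩, _⟩ := hlb.r3b c hc'
      have hpS : p ∈ S₁ := Finset.mem_filter.mpr ⟨hp, by rw [hpr]; exact hcμ⟩
      have : c = g2b p := hg2b_uniq p hp c hc' hpr.symm hps.symm
      exact Finset.mem_image.mpr ⟨p, hpS, this.symm⟩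
    · intro c hc
      obtain ⟨p, hpS, rfl⟩ := Finset.mem_image.mp hc
      have hp := hS₁star p hpS
      exact Finset.mem_filter.mpr ⟨(hg2b p hp).1, by rw [(hg2b p hp).2.1]; exact hS₁μ p hpS⟩
  have hinj2a : Set.InjOn g2a S₁ := by
    intro p hp p' hp' hpp
    have hps := hS₁star p hp
    have hps' := hS₁star p' hp'
    obtain ⟨hm, hr, hc⟩ := hg2a p hps
    obtain ⟨hm', hr', hc'⟩ := hg2a p' hps'
    obtain ⟨q, hq, huq⟩ := hlb.r3a (g2a p) hm
    have e1 := huq p ⟨hps, hr.symm, hc.symm⟩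
    have e2 := huq p' ⟨hps', by rw [hpp]; exact hr'.symm, by rw [hpp]; exact hc'.symm⟩
    rw [e1, e2]
  have hinj2b : Set.InjOn g2b S₁ := by
    intro p hp p' hp' hpp
    have hps := hS₁star p hp
    have hps' := hS₁star p' hp'
    obtain ⟨hm, hr, hc⟩ := hg2b p hps
    obtain ⟨hm', hr', hc'⟩ := hg2b p' hps'
    obtain ⟨q, hq, huq⟩ := hlb.r3b (g2b p) hm
    have e1 := huq p ⟨hps, hr.symm, hc.symm⟩
    have e2 := huq p' ⟨hps', by rw [hpp]; exact hr'.symm, by rw [hpp]; exact hc'.symm⟩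
    rw [e1, e2]
  -- sums
  have ecard : T₁.card = S₁.card := by
    rw [hT1a, Finset.card_image_of_injOn hinj2a]
  have esum2 : ∑ c ∈ T₁, f2 c.2.1 = ∑ p ∈ S₁, f2 p.2.1 := by
    rw [hT1a, Finset.sum_image (fun x hx y hy h => hinj2a hx hy h)]
    exact Finset.sum_congr rfl (fun p hp => by rw [(hg2a p (hS₁star p hp)).2.2])
  have esum3 : ∑ c ∈ T₁, f3 c.2.2 = ∑ p ∈ S₁, f3 p.2.2 := by
    rw [hT1b, Finset.sum_image (fun x hx y hy h => hinj2b hx hy h)]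
    exact Finset.sum_congr rfl (fun p hp => by rw [(hg2b p (hS₁star p hp)).2.2])
  -- step 1 : nonnegativity
  have hstep1 : ∀ c ∈ T₁, 0 ≤ f3 c.2.2 - f2 c.2.1 - μ := by
    intro c hc
    have hc' := hT₁tri c hc
    obtain ⟨hm, hcol, hsym⟩ := hg3c c hc'
    by_cases hpa : g3c c = a
    · rw [← hsym, ← hcol, hpa, h0', h1]
      linarith
    · have := heq (g3c c) hm hpa
      have hge := hμle (g3c c) hm
      rw [← hsym, ← hcol]
      linarith
  -- step 2 : sum is zero, hence all zero
  have hzero : ∀ c ∈ T₁, f3 c.2.2 - f2 c.2.1 - μ = 0 := by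
    have hsum : ∑ c ∈ T₁, (f3 c.2.2 - f2 c.2.1 - μ) = 0 := by
      rw [Finset.sum_sub_distrib, Finset.sum_sub_distrib, esum2, esum3,
        Finset.sum_const, ecard]
      have : ∀ p ∈ S₁, f3 p.2.2 = f2 p.2.1 + μ := by
        intro p hp
        have hps := hS₁star p hp
        have hμp := hS₁μ p hp
        have := heq p hps (hne_a p hμp)
        linarith
      rw [Finset.sum_congr rfl this, Finset.sum_add_distrib, Finset.sum_const]
      ring
    intro c hc
    exact (Finset.sum_eq_zero_iff_of_nonneg hstep1).mp hsum c hc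
  -- step 3 : U = T₁
  have hTU : T₁ ⊆ U := by
    intro c hc
    have := hzero c hc
    exact Finset.mem_filter.mpr ⟨hT₁tri c hc, by linarith⟩
  have hUS : ∀ c ∈ U, g3c c ∈ S₁ := by
    intro c hc
    obtain ⟨hc', hcv⟩ := Finset.mem_filter.mp hc
    obtain ⟨hm, hcol, hsym⟩ := hg3c c hc'
    by_cases hpa : g3c c = a
    · exfalso
      rw [hpa] at hcol hsym
      rw [← hsym, ← hcol, h0', h1] at hcv
      linarith
    · have := heq (g3c c) hm hpa
      refine Finset.mem_filter.mpr ⟨hm, ?_⟩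
      rw [← hsym, ← hcol] at hcv
      linarith
  have hUcard : U.card ≤ S₁.card := by
    apply Finset.card_le_card_of_injOn g3c (fun c hc => hUS c hc)
    intro c hc c' hc' hcc
    have hct := (Finset.mem_filter.mp hc).1
    have hct' := (Finset.mem_filter.mp hc').1
    obtain ⟨hm, hcol, hsym⟩ := hg3c c hct
    obtain ⟨hm', hcol', hsym'⟩ := hg3c c' hct'
    obtain ⟨q, hq, huq⟩ := hlb.r2c (g3c c) hm
    have e1 := huq c ⟨hct, hcol.symm, hsym.symm⟩
    have e2 := huq c' ⟨hct', by rw [hcc]; exact hcol'.symm, by rw [hcc]; exact hsym'.symm⟩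
    rw [e1, e2]
  have hUT : U = T₁ :=
    (Finset.eq_of_subset_of_card_le hTU (by rw [ecard]; exact hUcard)).symm
  -- the decomposition
  refine hind ⟨S₁, T₁, star.filter (fun p => ¬ f1 p.1 = μ), tri.filter (fun p => ¬ f1 p.1 = μ),
    ⟨b₀, Finset.mem_filter.mpr ⟨hb₀, hb₀μ⟩⟩,
    ⟨a, Finset.mem_filter.mpr ⟨ha, by rw [h0]; exact fun h => absurd h.symm (ne_of_lt hμneg)⟩⟩,
    Finset.disjoint_filter_filter_not star star _,
    Finset.disjoint_filter_filter_not tri tri _,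
    Finset.filter_union_filter_not_eq _ star,
    Finset.filter_union_filter_not_eq _ tri, ?_, ?_⟩
  · -- bitrade (S₁, T₁)
    refine ⟨hlb.disj.mono (Finset.filter_subset _ _) (Finset.filter_subset _ _), ?_, ?_, ?_, ?_, ?_, ?_⟩
    · intro p hp
      obtain ⟨hps, hpμ⟩ := Finset.mem_filter.mp hp
      obtain ⟨q, ⟨hq, hq1, hq2⟩, hu⟩ := hlb.r2a p hps
      exact ⟨q, ⟨Finset.mem_filter.mpr ⟨hq, by rw [hq1]; exact hpμ⟩, hq1, hq2⟩,
        fun y hy => hu y ⟨(Finset.mem_filter.mp hy.1).1, hy.2.1, hy.2.2⟩⟩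
    · intro p hp
      obtain ⟨hps, hpμ⟩ := Finset.mem_filter.mp hp
      obtain ⟨q, ⟨hq, hq1, hq2⟩, hu⟩ := hlb.r2b p hps
      exact ⟨q, ⟨Finset.mem_filter.mpr ⟨hq, by rw [hq1]; exact hpμ⟩, hq1, hq2⟩,
        fun y hy => hu y ⟨(Finset.mem_filter.mp hy.1).1, hy.2.1, hy.2.2⟩⟩
    · intro p hp
      obtain ⟨hps, hpμ⟩ := Finset.mem_filter.mp hp
      obtain ⟨q, ⟨hq, hq1, hq2⟩, hu⟩ := hlb.r2c p hps
      have hqT : q ∈ T₁ := by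
        rw [← hUT]
        refine Finset.mem_filter.mpr ⟨hq, ?_⟩
        have := heq p hps (hne_a p hpμ)
        rw [hq1, hq2]
        linarith
      exact ⟨q, ⟨hqT, hq1, hq2⟩,
        fun y hy => hu y ⟨(Finset.mem_filter.mp hy.1).1, hy.2.1, hy.2.2⟩⟩
    · intro c hc
      obtain ⟨hct, hcμ⟩ := Finset.mem_filter.mp hc
      obtain ⟨p, ⟨hp, hp1, hp2⟩, hu⟩ := hlb.r3a c hct
      exact ⟨p, ⟨Finset.mem_filter.mpr ⟨hp, by rw [hp1]; exact hcμ⟩, hp1, hp2⟩,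
        fun y hy => hu y ⟨(Finset.mem_filter.mp hy.1).1, hy.2.1, hy.2.2⟩⟩
    · intro c hc
      obtain ⟨hct, hcμ⟩ := Finset.mem_filter.mp hc
      obtain ⟨p, ⟨hp, hp1, hp2⟩, hu⟩ := hlb.r3b c hct
      exact ⟨p, ⟨Finset.mem_filter.mpr ⟨hp, by rw [hp1]; exact hcμ⟩, hp1, hp2⟩,
        fun y hy => hu y ⟨(Finset.mem_filter.mp hy.1).1, hy.2.1, hy.2.2⟩⟩
    · intro c hc
      obtain ⟨hct, hcμ⟩ := Finset.mem_filter.mp hc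
      obtain ⟨p, ⟨hp, hp1, hp2⟩, hu⟩ := hlb.r3c c hct
      have hz := hzero c hc
      have hpS : p ∈ S₁ := by
        refine Finset.mem_filter.mpr ⟨hp, ?_⟩
        by_cases hpa : p = a
        · exfalso
          rw [hpa] at hp1 hp2
          rw [← hp1, ← hp2, h0', h1] at hz
          linarith
        · have := heq p hp hpa
          rw [← hp1, ← hp2] at hz
          linarith
      exact ⟨p, ⟨hpS, hp1, hp2⟩,
        fun y hy => hu y ⟨(Finset.mem_filter.mp hy.1).1, hy.2.1, hy.2.2⟩⟩
  · -- bitrade on the complements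
    refine ⟨hlb.disj.mono (Finset.filter_subset _ _) (Finset.filter_subset _ _), ?_, ?_, ?_, ?_, ?_, ?_⟩
    · intro p hp
      obtain ⟨hps, hpμ⟩ := Finset.mem_filter.mp hp
      obtain ⟨q, ⟨hq, hq1, hq2⟩, hu⟩ := hlb.r2a p hps
      exact ⟨q, ⟨Finset.mem_filter.mpr ⟨hq, by rw [hq1]; exact hpμ⟩, hq1, hq2⟩,
        fun y hy => hu y ⟨(Finset.mem_filter.mp hy.1).1, hy.2.1, hy.2.2⟩⟩
    · intro p hp
      obtain ⟨hps, hpμ⟩ := Finset.mem_filter.mp hp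
      obtain ⟨q, ⟨hq, hq1, hq2⟩, hu⟩ := hlb.r2b p hps
      exact ⟨q, ⟨Finset.mem_filter.mpr ⟨hq, by rw [hq1]; exact hpμ⟩, hq1, hq2⟩,
        fun y hy => hu y ⟨(Finset.mem_filter.mp hy.1).1, hy.2.1, hy.2.2⟩⟩
    · intro p hp
      obtain ⟨hps, hpμ⟩ := Finset.mem_filter.mp hp
      obtain ⟨q, ⟨hq, hq1, hq2⟩, hu⟩ := hlb.r2c p hps
      have hqT : ¬ f1 q.1 = μ := by
        intro hqμ
        have hqT₁ : q ∈ T₁ := Finset.mem_filter.mpr ⟨hq, hqμ⟩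
        have hz := hzero q hqT₁
        rw [hq1, hq2] at hz
        by_cases hpa : p = a
        · rw [hpa, h0', h1] at hz
          linarith
        · have := heq p hps hpa
          exact hpμ (by linarith)
      exact ⟨q, ⟨Finset.mem_filter.mpr ⟨hq, hqT⟩, hq1, hq2⟩,
        fun y hy => hu y ⟨(Finset.mem_filter.mp hy.1).1, hy.2.1, hy.2.2⟩⟩
    · intro c hc
      obtain ⟨hct, hcμ⟩ := Finset.mem_filter.mp hc
      obtain ⟨p, ⟨hp, hp1, hp2⟩, hu⟩ := hlb.r3a c hct
      exact ⟨p, ⟨Finset.mem_filter.mpr ⟨hp, by rw [hp1]; exact hcμ⟩, hp1, hp2⟩,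
        fun y hy => hu y ⟨(Finset.mem_filter.mp hy.1).1, hy.2.1, hy.2.2⟩⟩
    · intro c hc
      obtain ⟨hct, hcμ⟩ := Finset.mem_filter.mp hc
      obtain ⟨p, ⟨hp, hp1, hp2⟩, hu⟩ := hlb.r3b c hct
      exact ⟨p, ⟨Finset.mem_filter.mpr ⟨hp, by rw [hp1]; exact hcμ⟩, hp1, hp2⟩,
        fun y hy => hu y ⟨(Finset.mem_filter.mp hy.1).1, hy.2.1, hy.2.2⟩⟩
    · intro c hc
      obtain ⟨hct, hcμ⟩ := Finset.mem_filter.mp hc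
      obtain ⟨p, ⟨hp, hp1, hp2⟩, hu⟩ := hlb.r3c c hct
      have hpQ : ¬ f1 p.1 = μ := by
        intro hpμ
        have hca : c ∈ U := by
          refine Finset.mem_filter.mpr ⟨hct, ?_⟩
          have := heq p hp (hne_a p hpμ)
          rw [← hp1, ← hp2]
          linarith
        rw [hUT] at hca
        exact hcμ (Finset.mem_filter.mp hca).2
      exact ⟨p, ⟨Finset.mem_filter.mpr ⟨hp, hpQ⟩, hp1, hp2⟩,
        fun y hy => hu y ⟨(Finset.mem_filter.mp hy.1).1, hy.2.1, hy.2.2⟩⟩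




variable {R C S : Type*} [DecidableEq R] [DecidableEq C] [DecidableEq S]

/-- swap the first two coordinates -/
def sw12 (p : R × C × S) : C × R × S := (p.2.1, p.1, p.2.2)

/-- swap the first and the last coordinates -/
def sw13 (p : R × C × S) : S × C × R := (p.2.2, p.2.1, p.1)

lemma sw12_inj : Function.Injective (sw12 : R × C × S → C × R × S) := by
  rintro ⟨r, c, s⟩ ⟨r', c', s'⟩ h
  simp only [sw12, Prod.ext_iff] at h ⊢
  tauto

lemma sw13_inj : Function.Injective (sw13 : R × C × S → S × C × R) := by
  rintro ⟨r, c, s⟩ ⟨r', c', s'⟩ h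
  simp only [sw13, Prod.ext_iff] at h ⊢
  tauto

lemma sw12_sw12 (p : R × C × S) : sw12 (sw12 p) = p := rfl

lemma sw13_sw13 (p : R × C × S) : sw13 (sw13 p) = p := rfl

lemma isLatinBitrade_sw12 {star tri : Finset (R × C × S)} (h : IsLatinBitrade star tri) :
    IsLatinBitrade (star.image sw12) (tri.image sw12) := by
  refine ⟨(Finset.disjoint_image sw12_inj).mpr h.disj, ?_, ?_, ?_, ?_, ?_, ?_⟩
  · rintro p' hp'
    obtain ⟨p, hp, rfl⟩ := Finset.mem_image.mp hp'
    obtain ⟨q, ⟨hq, e1, e2⟩, hu⟩ := h.r2a p hp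
    refine ⟨sw12 q, ⟨Finset.mem_image_of_mem _ hq, e2, e1⟩, ?_⟩
    rintro y ⟨hy, hy1, hy2⟩
    obtain ⟨q₀, hq₀, rfl⟩ := Finset.mem_image.mp hy
    exact congrArg sw12 (hu q₀ ⟨hq₀, hy2, hy1⟩)
  · rintro p' hp'
    obtain ⟨p, hp, rfl⟩ := Finset.mem_image.mp hp'
    obtain ⟨q, ⟨hq, e1, e2⟩, hu⟩ := h.r2c p hp
    refine ⟨sw12 q, ⟨Finset.mem_image_of_mem _ hq, e1, e2⟩, ?_⟩
    rintro y ⟨hy, hy1, hy2⟩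
    obtain ⟨q₀, hq₀, rfl⟩ := Finset.mem_image.mp hy
    exact congrArg sw12 (hu q₀ ⟨hq₀, hy1, hy2⟩)
  · rintro p' hp'
    obtain ⟨p, hp, rfl⟩ := Finset.mem_image.mp hp'
    obtain ⟨q, ⟨hq, e1, e2⟩, hu⟩ := h.r2b p hp
    refine ⟨sw12 q, ⟨Finset.mem_image_of_mem _ hq, e1, e2⟩, ?_⟩
    rintro y ⟨hy, hy1, hy2⟩
    obtain ⟨q₀, hq₀, rfl⟩ := Finset.mem_image.mp hy
    exact congrArg sw12 (hu q₀ ⟨hq₀, hy1, hy2⟩)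
  · rintro p' hp'
    obtain ⟨p, hp, rfl⟩ := Finset.mem_image.mp hp'
    obtain ⟨q, ⟨hq, e1, e2⟩, hu⟩ := h.r3a p hp
    refine ⟨sw12 q, ⟨Finset.mem_image_of_mem _ hq, e2, e1⟩, ?_⟩
    rintro y ⟨hy, hy1, hy2⟩
    obtain ⟨q₀, hq₀, rfl⟩ := Finset.mem_image.mp hy
    exact congrArg sw12 (hu q₀ ⟨hq₀, hy2, hy1⟩)
  · rintro p' hp'
    obtain ⟨p, hp, rfl⟩ := Finset.mem_image.mp hp'
    obtain ⟨q, ⟨hq, e1, e2⟩, hu⟩ := h.r3c p hp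
    refine ⟨sw12 q, ⟨Finset.mem_image_of_mem _ hq, e1, e2⟩, ?_⟩
    rintro y ⟨hy, hy1, hy2⟩
    obtain ⟨q₀, hq₀, rfl⟩ := Finset.mem_image.mp hy
    exact congrArg sw12 (hu q₀ ⟨hq₀, hy1, hy2⟩)
  · rintro p' hp'
    obtain ⟨p, hp, rfl⟩ := Finset.mem_image.mp hp'
    obtain ⟨q, ⟨hq, e1, e2⟩, hu⟩ := h.r3b p hp
    refine ⟨sw12 q, ⟨Finset.mem_image_of_mem _ hq, e1, e2⟩, ?_⟩
    rintro y ⟨hy, hy1, hy2⟩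
    obtain ⟨q₀, hq₀, rfl⟩ := Finset.mem_image.mp hy
    exact congrArg sw12 (hu q₀ ⟨hq₀, hy1, hy2⟩)

lemma isLatinBitrade_sw13 {star tri : Finset (R × C × S)} (h : IsLatinBitrade star tri) :
    IsLatinBitrade (star.image sw13) (tri.image sw13) := by
  refine ⟨(Finset.disjoint_image sw13_inj).mpr h.disj, ?_, ?_, ?_, ?_, ?_, ?_⟩
  · rintro p' hp'
    obtain ⟨p, hp, rfl⟩ := Finset.mem_image.mp hp'
    obtain ⟨q, ⟨hq, e1, e2⟩, hu⟩ := h.r2c p hp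
    refine ⟨sw13 q, ⟨Finset.mem_image_of_mem _ hq, e2, e1⟩, ?_⟩
    rintro y ⟨hy, hy1, hy2⟩
    obtain ⟨q₀, hq₀, rfl⟩ := Finset.mem_image.mp hy
    exact congrArg sw13 (hu q₀ ⟨hq₀, hy2, hy1⟩)
  · rintro p' hp'
    obtain ⟨p, hp, rfl⟩ := Finset.mem_image.mp hp'
    obtain ⟨q, ⟨hq, e1, e2⟩, hu⟩ := h.r2b p hp
    refine ⟨sw13 q, ⟨Finset.mem_image_of_mem _ hq, e2, e1⟩, ?_⟩
    rintro y ⟨hy, hy1, hy2⟩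
    obtain ⟨q₀, hq₀, rfl⟩ := Finset.mem_image.mp hy
    exact congrArg sw13 (hu q₀ ⟨hq₀, hy2, hy1⟩)
  · rintro p' hp'
    obtain ⟨p, hp, rfl⟩ := Finset.mem_image.mp hp'
    obtain ⟨q, ⟨hq, e1, e2⟩, hu⟩ := h.r2a p hp
    refine ⟨sw13 q, ⟨Finset.mem_image_of_mem _ hq, e2, e1⟩, ?_⟩
    rintro y ⟨hy, hy1, hy2⟩
    obtain ⟨q₀, hq₀, rfl⟩ := Finset.mem_image.mp hy
    exact congrArg sw13 (hu q₀ ⟨hq₀, hy2, hy1⟩)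
  · rintro p' hp'
    obtain ⟨p, hp, rfl⟩ := Finset.mem_image.mp hp'
    obtain ⟨q, ⟨hq, e1, e2⟩, hu⟩ := h.r3c p hp
    refine ⟨sw13 q, ⟨Finset.mem_image_of_mem _ hq, e2, e1⟩, ?_⟩
    rintro y ⟨hy, hy1, hy2⟩
    obtain ⟨q₀, hq₀, rfl⟩ := Finset.mem_image.mp hy
    exact congrArg sw13 (hu q₀ ⟨hq₀, hy2, hy1⟩)
  · rintro p' hp'
    obtain ⟨p, hp, rfl⟩ := Finset.mem_image.mp hp'
    obtain ⟨q, ⟨hq, e1, e2⟩, hu⟩ := h.r3b p hp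
    refine ⟨sw13 q, ⟨Finset.mem_image_of_mem _ hq, e2, e1⟩, ?_⟩
    rintro y ⟨hy, hy1, hy2⟩
    obtain ⟨q₀, hq₀, rfl⟩ := Finset.mem_image.mp hy
    exact congrArg sw13 (hu q₀ ⟨hq₀, hy2, hy1⟩)
  · rintro p' hp'
    obtain ⟨p, hp, rfl⟩ := Finset.mem_image.mp hp'
    obtain ⟨q, ⟨hq, e1, e2⟩, hu⟩ := h.r3a p hp
    refine ⟨sw13 q, ⟨Finset.mem_image_of_mem _ hq, e2, e1⟩, ?_⟩
    rintro y ⟨hy, hy1, hy2⟩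
    obtain ⟨q₀, hq₀, rfl⟩ := Finset.mem_image.mp hy
    exact congrArg sw13 (hu q₀ ⟨hq₀, hy2, hy1⟩)

lemma indec_sw12 {star tri : Finset (R × C × S)} (h : BitradeIndecomposable star tri) :
    BitradeIndecomposable (star.image sw12) (tri.image sw12) := by
  rintro ⟨s₁, t₁, s₂, t₂, h1, h2, h3, h4, h5, h6, hb1, hb2⟩
  have himg : ∀ u : Finset (R × C × S), (u.image sw12).image sw12 = u := by
    intro u
    rw [Finset.image_image]
    have : (sw12 ∘ sw12 : R × C × S → R × C × S) = id := funext fun p => sw12_sw12 p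
    rw [this, Finset.image_id]
  refine h ⟨s₁.image sw12, t₁.image sw12, s₂.image sw12, t₂.image sw12,
    h1.image _, h2.image _, (Finset.disjoint_image sw12_inj).mpr h3,
    (Finset.disjoint_image sw12_inj).mpr h4, ?_, ?_,
    isLatinBitrade_sw12 hb1, isLatinBitrade_sw12 hb2⟩
  · rw [← Finset.image_union, h5, himg]
  · rw [← Finset.image_union, h6, himg]

lemma indec_sw13 {star tri : Finset (R × C × S)} (h : BitradeIndecomposable star tri) :
    BitradeIndecomposable (star.image sw13) (tri.image sw13) := by
  rintro ⟨s₁, t₁, s₂, t₂, h1, h2, h3, h4, h5, h6, hb1, hb2⟩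
  have himg : ∀ u : Finset (R × C × S), (u.image sw13).image sw13 = u := by
    intro u
    rw [Finset.image_image]
    have : (sw13 ∘ sw13 : R × C × S → R × C × S) = id := funext fun p => sw13_sw13 p
    rw [this, Finset.image_id]
  refine h ⟨s₁.image sw13, t₁.image sw13, s₂.image sw13, t₂.image sw13,
    h1.image _, h2.image _, (Finset.disjoint_image sw13_inj).mpr h3,
    (Finset.disjoint_image sw13_inj).mpr h4, ?_, ?_,
    isLatinBitrade_sw13 hb1, isLatinBitrade_sw13 hb2⟩
  · rw [← Finset.image_union, h5, himg]
  · rw [← Finset.image_union, h6, himg]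



end BitradeAux

/-- **Lemma 2.3.** Every triangle `Δ(c,a)`, `c ∈ T△`, is contained in `Σ`. -/
theorem stmt2 (star tri : Finset (R × C × S)) (hsph : IsSphericalBitrade star tri)
    (a : R × C × S) (ha : a ∈ star)
    (f1 : R → ℚ) (f2 : C → ℚ) (f3 : S → ℚ)
    (hsol : IsEqSolution star a f1 f2 f3) :
    ∀ c ∈ tri, DeltaOf f1 f2 f3 c ⊆ SigmaT := by
  obtain ⟨hlb, hind, -⟩ := hsph
  obtain ⟨h0, h0', h1, heq⟩ := hsol
  -- row values are nonnegative
  have hrow : ∀ b ∈ star, 0 ≤ f1 b.1 :=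
    key_nonneg star tri hlb hind a ha f1 f2 f3 ⟨h0, h0', h1, heq⟩
  -- column values are nonnegative
  have hcol : ∀ b ∈ star, 0 ≤ f2 b.2.1 := by
    have hmain := key_nonneg (star.image sw12) (tri.image sw12)
      (isLatinBitrade_sw12 hlb) (indec_sw12 hind) (sw12 a)
      (Finset.mem_image_of_mem _ ha) f2 f1 f3
      ⟨h0', h0, h1, ?_⟩
    · intro b hb
      exact hmain (sw12 b) (Finset.mem_image_of_mem _ hb)
    · rintro b' hb' hbne
      obtain ⟨b, hb, rfl⟩ := Finset.mem_image.mp hb'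
      have hba : b ≠ a := fun h => hbne (by rw [h])
      have := heq b hb hba
      show f2 b.2.1 + f1 b.1 = f3 b.2.2
      linarith
  -- symbol values are at most one
  have hsym : ∀ b ∈ star, f3 b.2.2 ≤ 1 := by
    have hmain := key_nonneg (star.image sw13) (tri.image sw13)
      (isLatinBitrade_sw13 hlb) (indec_sw13 hind) (sw13 a)
      (Finset.mem_image_of_mem _ ha) (fun s => 1 - f3 s) f2 (fun r => 1 - f1 r)
      ⟨?_, ?_, ?_, ?_⟩
    · intro b hb
      have := hmain (sw13 b) (Finset.mem_image_of_mem _ hb)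
      simp only [sw13] at this
      linarith
    · show 1 - f3 a.2.2 = 0; rw [h1]; ring
    · exact h0'
    · show 1 - f1 a.1 = 1; rw [h0]; ring
    · rintro b' hb' hbne
      obtain ⟨b, hb, rfl⟩ := Finset.mem_image.mp hb'
      have hba : b ≠ a := fun h => hbne (by rw [h])
      have := heq b hb hba
      show (1 - f3 b.2.2) + f2 b.2.1 = 1 - f1 b.1
      linarith
  -- star triples obey f1 + f2 ≤ 1
  have hsum1 : ∀ b ∈ star, f1 b.1 + f2 b.2.1 ≤ 1 := by
    intro b hb
    by_cases hba : b = a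
    · rw [hba, h0, h0']; norm_num
    · rw [heq b hb hba]; exact hsym b hb
  -- now the main statement
  intro c hc
  -- bounds for the three values of c via its three mates
  obtain ⟨pa, ⟨hpa, hpa1, hpa2⟩, -⟩ := hlb.r3a c hc
  obtain ⟨pb, ⟨hpb, hpb1, hpb2⟩, -⟩ := hlb.r3b c hc
  obtain ⟨pc, ⟨hpc, hpc1, hpc2⟩, -⟩ := hlb.r3c c hc
  have hr1 : (0 : ℚ) ≤ f1 c.1 := by rw [← hpa1]; exact hrow pa hpa
  have hr2 : (0 : ℚ) ≤ f2 c.2.1 := by rw [← hpa2]; exact hcol pa hpa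
  have hr12 : f1 c.1 + f2 c.2.1 ≤ 1 := by rw [← hpa1, ← hpa2]; exact hsum1 pa hpa
  have hr3 : f3 c.2.2 ≤ 1 := by rw [← hpc2]; exact hsym pc hpc
  have hr31 : f1 c.1 ≤ f3 c.2.2 := by
    by_cases hba : pb = a
    · rw [← hpb1, ← hpb2, hba, h0, h1]; norm_num
    · have := heq pb hpb hba
      have := hcol pb hpb
      rw [← hpb1, ← hpb2]
      linarith
  have hr32 : f2 c.2.1 ≤ f3 c.2.2 := by
    by_cases hca : pc = a
    · rw [← hpc1, ← hpc2, hca, h0', h1]; norm_num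
    · have := heq pc hpc hca
      have := hrow pc hpc
      rw [← hpc1, ← hpc2]
      linarith
  -- cast to ℝ
  have cr1 : (0 : ℝ) ≤ (f1 c.1 : ℝ) := by exact_mod_cast hr1
  have cr2 : (0 : ℝ) ≤ (f2 c.2.1 : ℝ) := by exact_mod_cast hr2
  have cr12 : (f1 c.1 : ℝ) + (f2 c.2.1 : ℝ) ≤ 1 := by exact_mod_cast hr12
  have cr3 : (f3 c.2.2 : ℝ) ≤ 1 := by exact_mod_cast hr3
  have cr31 : (f1 c.1 : ℝ) ≤ (f3 c.2.2 : ℝ) := by exact_mod_cast hr31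
  have cr32 : (f2 c.2.1 : ℝ) ≤ (f3 c.2.2 : ℝ) := by exact_mod_cast hr32
  rintro ⟨x, y⟩ hxy
  rcases hxy with ⟨hy, hx, hxy3⟩ | ⟨hy, hx, hxy3⟩
  · exact ⟨le_trans cr2 hx, le_trans cr1 hy, le_trans hxy3 cr3⟩
  · refine ⟨?_, ?_, ?_⟩
    · simp only at hy hx hxy3 ⊢
      linarith
    · simp only at hy hx hxy3 ⊢
      linarith
    · simp only at hy hx hxy3 ⊢
      linarith
end

section
/- Let T = (T*, T△) be a spherical latin bitrade and a = (a1,a2,a3) ∈ T*. Suppose b = (b1,b2,b3) ∈ T* and i ∈ {1,2,3} are such that b_i ≠ a_i and b̄_i = ā_i. Then Δ(c,a) degenerates for every c = (c1,c2,c3) ∈ T△ with c_i = b_i, and the point b̄ = (b̄2, b̄1) is not a vertex of Σ. -/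
open Function Set

variable {R C S : Type*} [DecidableEq R] [DecidableEq C] [DecidableEq S]

/-- `p` and `q` agree in the `i`-th coordinate. -/
def coordEq (p q : R × C × S) : Fin 3 → Prop :=
  ![p.1 = q.1, p.2.1 = q.2.1, p.2.2 = q.2.2]

/-!
Put `λ(t) = (t̄₁, t̄₂, 1 - t̄₃)` for every triple `t`. For `t ∈ T* \ {a}` these are the
barycentric coordinates of `t̄` in `Σ`, and `Δ(c,a)` degenerates iff `∑ λ(c) = 1`.

Since `T*` and `T△` are matched along any two coordinates, a function of two coordinates has
the same sum over `T*` and over `T△`. Applied to `1 - ∑ λ` on a row, column or symbol class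
avoiding `a`, this shows that `∑ λ ≤ 1` throughout such a class forces `∑ λ = 1` throughout it.

Indecomposability enters through level sets: if a condition on one coordinate and a condition
on the other two agree on `T*`, they agree on `T△` as soon as one implies the other there (both
cut out equally many triples), and then the triples satisfying them form a sub-bitrade, which
is empty if it misses `a`. The minimum of `λᵢ` over `T*`, if negative, and the value `λᵢ = 1`
give such level sets; hence every `b̄` lies in `Σ`, and none but `ā` is a vertex. If `b̄ᵢ = āᵢ`
with `bᵢ ≠ aᵢ`, the class of `bᵢ` avoids `a` and has `λᵢ = 0`, while `λᵢ₊₁ + λᵢ₊₂ ≤ 1` on `T△`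
because it holds on `T*`; so every `Δ(c,a)` in that class degenerates.
-/

theorem Finset.sum_eq_sum_of_existsUnique {α β : Type*} [AddCommMonoid β] {s t : Finset α}
    (E : α → α → Prop) (hs : ∀ p ∈ s, ∃! q, q ∈ t ∧ E p q)
    (ht : ∀ q ∈ t, ∃! p, p ∈ s ∧ E p q)
    (w : α → β) (hw : ∀ p q, E p q → w p = w q) :
    ∑ p ∈ s, w p = ∑ q ∈ t, w q := by
  choose! g hg huniq using hs
  refine Finset.sum_bij (fun p _ => g p) (fun p hp => (hg p hp).1) ?_ ?_
    fun p hp => hw p _ (hg p hp).2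
  · intro p₁ h₁ p₂ h₂ heq
    exact (ht _ (hg p₁ h₁).1).unique ⟨h₁, (hg p₁ h₁).2⟩ ⟨h₂, heq ▸ (hg p₂ h₂).2⟩
  · intro q hq
    obtain ⟨p, ⟨hp, hE⟩, -⟩ := ht q hq
    exact ⟨p, hp, (huniq p hp q ⟨hq, hE⟩).symm⟩

theorem Fin.sum_univ_three_rotate {β : Type*} [AddCommMonoid β] (g : Fin 3 → β) (i : Fin 3) :
    ∑ k, g k = g i + g (i + 1) + g (i + 2) := by
  fin_cases i <;> simp [Fin.sum_univ_three] <;> abel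

theorem Fin.add_one_ne_add_two (i : Fin 3) : i + 1 ≠ i + 2 := by
  fin_cases i <;> decide

section Bitrades

variable {R C S : Type*} {star tri : Finset (R × C × S)} {a p q r : R × C × S} {i j k : Fin 3}

theorem coordEq_refl (p : R × C × S) (i : Fin 3) : coordEq p p i := by
  fin_cases i <;> exact rfl

theorem coordEq_comm : coordEq p q i ↔ coordEq q p i := by
  fin_cases i <;> exact eq_comm

theorem coordEq.trans (hpq : coordEq p q i) (hqr : coordEq q r i) : coordEq p r i := by
  fin_cases i <;> exact Eq.trans hpq hqr

theorem coordEq_or_of_ne (hjk : j ≠ k) (hj : coordEq p q j) (hk : coordEq p q k) (i : Fin 3) :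
    coordEq p q i ∨ coordEq p q (i + 1) ∧ coordEq p q (i + 2) := by
  fin_cases i <;> fin_cases j <;> fin_cases k <;> simp_all

theorem isLatinBitrade_iff : IsLatinBitrade star tri ↔ Disjoint star tri ∧
    (∀ j k : Fin 3, j ≠ k → ∀ p ∈ star, ∃! q, q ∈ tri ∧ coordEq p q j ∧ coordEq p q k) ∧
    (∀ j k : Fin 3, j ≠ k → ∀ q ∈ tri, ∃! p, p ∈ star ∧ coordEq p q j ∧ coordEq p q k) := by
  have swap (s : Finset (R × C × S)) (P Q : R × C × S → Prop) :
      (∃! x, x ∈ s ∧ P x ∧ Q x) ↔ ∃! x, x ∈ s ∧ Q x ∧ P x :=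
    existsUnique_congr fun _ => and_congr_right' and_comm
  have flip (p : R × C × S) (j k : Fin 3) : (∃! q, q ∈ tri ∧ coordEq q p j ∧ coordEq q p k) ↔
      ∃! q, q ∈ tri ∧ coordEq p q j ∧ coordEq p q k :=
    existsUnique_congr fun _ => and_congr_right' (and_congr coordEq_comm coordEq_comm)
  constructor
  · rintro ⟨hd, h2a, h2b, h2c, h3a, h3b, h3c⟩
    refine ⟨hd, fun j k hjk p hp => (flip p j k).1 ?_, fun j k hjk q hq => ?_⟩
    · fin_cases j <;> fin_cases k
      all_goals first
        | exact absurd rfl hjk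
        | exact h2a p hp | exact h2b p hp | exact h2c p hp
        | exact (swap _ _ _).1 (h2a p hp) | exact (swap _ _ _).1 (h2b p hp)
        | exact (swap _ _ _).1 (h2c p hp)
    · fin_cases j <;> fin_cases k
      all_goals first
        | exact absurd rfl hjk
        | exact h3a q hq | exact h3b q hq | exact h3c q hq
        | exact (swap _ _ _).1 (h3a q hq) | exact (swap _ _ _).1 (h3b q hq)
        | exact (swap _ _ _).1 (h3c q hq)
  · rintro ⟨hd, h2, h3⟩
    exact ⟨hd, fun p hp => (flip p 0 1).2 (h2 0 1 (by decide) p hp),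
      fun p hp => (flip p 0 2).2 (h2 0 2 (by decide) p hp),
      fun p hp => (flip p 1 2).2 (h2 1 2 (by decide) p hp),
      h3 0 1 (by decide), h3 0 2 (by decide), h3 1 2 (by decide)⟩

theorem IsLatinBitrade.existsUnique_tri (bt : IsLatinBitrade star tri) (hjk : j ≠ k)
    (hp : p ∈ star) : ∃! q, q ∈ tri ∧ coordEq p q j ∧ coordEq p q k :=
  (isLatinBitrade_iff.1 bt).2.1 j k hjk p hp

theorem IsLatinBitrade.existsUnique_star (bt : IsLatinBitrade star tri) (hjk : j ≠ k)
    (hq : q ∈ tri) : ∃! p, p ∈ star ∧ coordEq p q j ∧ coordEq p q k :=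
  (isLatinBitrade_iff.1 bt).2.2 j k hjk q hq

theorem IsLatinBitrade.eq_of_coordEq (bt : IsLatinBitrade star tri) (hjk : j ≠ k)
    (hp : p ∈ star) (hr : r ∈ star) (hj : coordEq p r j) (hk : coordEq p r k) : p = r := by
  obtain ⟨q, ⟨hq, hqj, hqk⟩, -⟩ := bt.existsUnique_tri hjk hp
  exact (bt.existsUnique_star hjk hq).unique ⟨hp, hqj, hqk⟩
    ⟨hr, (coordEq_comm.1 hj).trans hqj, (coordEq_comm.1 hk).trans hqk⟩

theorem IsLatinBitrade.forall_tri_of_forall_star (bt : IsLatinBitrade star tri) (hjk : j ≠ k)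
    {P : R × C × S → Prop} (hP : ∀ p q, coordEq p q j → coordEq p q k → P p → P q)
    (h : ∀ p ∈ star, P p) : ∀ q ∈ tri, P q := fun q hq =>
  let ⟨p, ⟨hp, hj, hk⟩, _⟩ := bt.existsUnique_star hjk hq
  hP p q hj hk (h p hp)

theorem IsLatinBitrade.sum_tri_eq_sum_star {β : Type*} [AddCommMonoid β]
    (bt : IsLatinBitrade star tri) (i k : Fin 3) (w : R × C × S → β)
    (hw : ∀ p q, coordEq p q i → coordEq p q k → w p = w q) :
    ∑ q ∈ tri, w q = ∑ p ∈ star, w p := by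
  obtain ⟨j, l, hjl, hw'⟩ : ∃ j l : Fin 3, j ≠ l ∧
      ∀ p q, coordEq p q j → coordEq p q l → w p = w q := by
    by_cases hik : i = k
    · subst hik
      exact ⟨i, i + 1, by fin_cases i <;> decide, fun p q hi _ => hw p q hi hi⟩
    · exact ⟨i, k, hik, hw⟩
  exact (Finset.sum_eq_sum_of_existsUnique _ (fun p hp => bt.existsUnique_tri hjl hp)
    (fun q hq => bt.existsUnique_star hjl hq) w fun p q h => hw' p q h.1 h.2).symm

theorem IsLatinBitrade.tri_imp_of_star_iff (bt : IsLatinBitrade star tri)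
    {P Q : R × C × S → Prop} (j k j' k' : Fin 3)
    (hP : ∀ p q, coordEq p q j → coordEq p q k → (P p ↔ P q))
    (hQ : ∀ p q, coordEq p q j' → coordEq p q k' → (Q p ↔ Q q))
    (hstar : ∀ p ∈ star, P p ↔ Q p) (htri : ∀ c ∈ tri, P c → Q c) :
    ∀ c ∈ tri, Q c → P c := by
  classical
  have hcard (X : R × C × S → Prop) (j k : Fin 3)
      (hX : ∀ p q, coordEq p q j → coordEq p q k → (X p ↔ X q)) :
      (tri.filter X).card = (star.filter X).card := by
    simp only [Finset.card_filter]
    exact bt.sum_tri_eq_sum_star j k _ fun p q hj hk => by simp only [hX p q hj hk]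
  have hsub : tri.filter P ⊆ tri.filter Q := fun c hc => by
    rw [Finset.mem_filter] at hc ⊢
    exact ⟨hc.1, htri c hc.1 hc.2⟩
  have heq := Finset.eq_of_subset_of_card_le hsub (by
    rw [hcard Q j' k' hQ, hcard P j k hP, Finset.filter_congr hstar])
  intro c hc hQc
  have hc' : c ∈ tri.filter P := heq ▸ Finset.mem_filter.2 ⟨hc, hQc⟩
  exact (Finset.mem_filter.1 hc').2

theorem IsLatinBitrade.filter (bt : IsLatinBitrade star tri) (M : R × C × S → Prop)
    [DecidablePred M] (hM : ∀ p ∈ star, ∀ q ∈ tri, ∀ j k : Fin 3, j ≠ k →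
      coordEq p q j → coordEq p q k → (M p ↔ M q)) :
    IsLatinBitrade (star.filter M) (tri.filter M) := by
  obtain ⟨hd, h2, h3⟩ := isLatinBitrade_iff.1 bt
  refine isLatinBitrade_iff.2 ⟨hd.mono (Finset.filter_subset _ _) (Finset.filter_subset _ _),
    fun j k hjk p hp => ?_, fun j k hjk q hq => ?_⟩
  · obtain ⟨hp, hMp⟩ := Finset.mem_filter.1 hp
    obtain ⟨q, ⟨hq, hj, hk⟩, huniq⟩ := h2 j k hjk p hp
    exact ⟨q, ⟨Finset.mem_filter.2 ⟨hq, (hM p hp q hq j k hjk hj hk).1 hMp⟩, hj, hk⟩,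
      fun q' ⟨hq', hE⟩ => huniq q' ⟨(Finset.mem_filter.1 hq').1, hE⟩⟩
  · obtain ⟨hq, hMq⟩ := Finset.mem_filter.1 hq
    obtain ⟨p, ⟨hp, hj, hk⟩, huniq⟩ := h3 j k hjk q hq
    exact ⟨p, ⟨Finset.mem_filter.2 ⟨hp, (hM p hp q hq j k hjk hj hk).2 hMq⟩, hj, hk⟩,
      fun p' ⟨hp', hE⟩ => huniq p' ⟨(Finset.mem_filter.1 hp').1, hE⟩⟩

theorem BitradeIndecomposable.forall_not_of_invariant
    [DecidableEq R] [DecidableEq C] [DecidableEq S] (hind : BitradeIndecomposable star tri)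
    (bt : IsLatinBitrade star tri) (M : R × C × S → Prop)
    (hM : ∀ p ∈ star, ∀ q ∈ tri, ∀ j k : Fin 3, j ≠ k →
      coordEq p q j → coordEq p q k → (M p ↔ M q))
    (ha : a ∈ star) (hMa : ¬ M a) : ∀ p ∈ star, ¬ M p := by
  classical
  intro p hp hMp
  exact hind ⟨star.filter M, tri.filter M, star.filter (¬ M ·), tri.filter (¬ M ·),
    ⟨p, Finset.mem_filter.2 ⟨hp, hMp⟩⟩, ⟨a, Finset.mem_filter.2 ⟨ha, hMa⟩⟩,
    Finset.disjoint_filter_filter_not _ _ _, Finset.disjoint_filter_filter_not _ _ _,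
    Finset.filter_union_filter_not_eq _ _, Finset.filter_union_filter_not_eq _ _,
    bt.filter M hM,
    bt.filter _ fun p hp q hq j k hjk hj hk => not_congr (hM p hp q hq j k hjk hj hk)⟩

theorem BitradeIndecomposable.forall_not_of_iff
    [DecidableEq R] [DecidableEq C] [DecidableEq S] (hind : BitradeIndecomposable star tri)
    (bt : IsLatinBitrade star tri) (i : Fin 3) {P Q : R × C × S → Prop}
    (hP : ∀ p q, coordEq p q i → (P p ↔ P q))
    (hQ : ∀ p q, coordEq p q (i + 1) → coordEq p q (i + 2) → (Q p ↔ Q q))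
    (hstar : ∀ p ∈ star, P p ↔ Q p) (htri : ∀ c ∈ tri, P c ↔ Q c)
    (ha : a ∈ star) (hPa : ¬ P a) : ∀ p ∈ star, ¬ P p :=
  hind.forall_not_of_invariant bt P (fun p hp q hq _ _ hjk hj hk =>
    (coordEq_or_of_ne hjk hj hk i).elim (hP p q)
      fun h => (hstar p hp).trans ((hQ p q h.1 h.2).trans (htri q hq).symm)) ha hPa

end Bitrades

section Solutions

variable {R C S : Type*} {star tri : Finset (R × C × S)} {a b c p : R × C × S}
  {f1 : R → ℚ} {f2 : C → ℚ} {f3 : S → ℚ}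

/-- For a triple `p ≠ a` of `T*`, `baryCoord f1 f2 f3 p` are the barycentric coordinates of
`p̄ = (p̄₂, p̄₁)` with respect to the vertices `(0,1)`, `(1,0)`, `(0,0)` of `Σ`. For `c ∈ T△`,
the sides `y = c̄₁`, `x = c̄₂`, `x + y = c̄₃` of `Δ(c,a)` are level lines of these coordinates. -/
def baryCoord (f1 : R → ℚ) (f2 : C → ℚ) (f3 : S → ℚ) (t : R × C × S) : Fin 3 → ℚ :=
  ![f1 t.1, f2 t.2.1, 1 - f3 t.2.2]

theorem baryCoord_congr {p q : R × C × S} {i : Fin 3} (h : coordEq p q i) :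
    baryCoord f1 f2 f3 p i = baryCoord f1 f2 f3 q i := by
  fin_cases i
  exacts [congrArg f1 h, congrArg f2 h, congrArg (1 - f3 ·) h]

theorem baryCoord_eq_iff_coordVal_eq {p q : R × C × S} {i : Fin 3} :
    baryCoord f1 f2 f3 p i = baryCoord f1 f2 f3 q i ↔
      coordVal f1 f2 f3 p i = coordVal f1 f2 f3 q i := by
  fin_cases i <;> simp [baryCoord, coordVal]

theorem sum_baryCoord_eq_one_iff (t : R × C × S) :
    ∑ i, baryCoord f1 f2 f3 t i = 1 ↔ DeltaDegenerate (f1 t.1) (f2 t.2.1) (f3 t.2.2) := by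
  simp only [baryCoord, DeltaDegenerate, Fin.sum_univ_three, Matrix.cons_val_zero,
    Matrix.cons_val_one, Matrix.cons_val_two, Matrix.head_cons, Matrix.tail_cons]
  constructor <;> intro h <;> linarith

theorem IsEqSolution.baryCoord_self (hsol : IsEqSolution star a f1 f2 f3) (i : Fin 3) :
    baryCoord f1 f2 f3 a i = 0 := by
  obtain ⟨h1, h2, h3, -⟩ := hsol
  fin_cases i <;> simp [baryCoord, h1, h2, h3]

theorem IsEqSolution.sum_baryCoord (hsol : IsEqSolution star a f1 f2 f3) (hp : p ∈ star)
    (hpa : p ≠ a) : ∑ i, baryCoord f1 f2 f3 p i = 1 :=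
  (sum_baryCoord_eq_one_iff p).2 (hsol.2.2.2 p hp hpa)

theorem IsEqSolution.sum_filter_tri_one_sub_sum_baryCoord
    (hsol : IsEqSolution star a f1 f2 f3) (bt : IsLatinBitrade star tri) (ha : a ∈ star)
    (i : Fin 3) (P : R × C × S → Prop) [DecidablePred P]
    (hP : ∀ p q, coordEq p q i → (P p ↔ P q)) :
    ∑ c ∈ tri.filter P, (1 - ∑ k, baryCoord f1 f2 f3 c k) = if P a then 1 else 0 := by
  have hsplit (t : R × C × S) : (if P t then 1 - ∑ k, baryCoord f1 f2 f3 t k else 0) =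
      (if P t then 1 else 0) - ∑ k, (if P t then baryCoord f1 f2 f3 t k else 0) := by
    split_ifs <;> simp
  have htri_star : ∑ c ∈ tri, (if P c then 1 - ∑ k, baryCoord f1 f2 f3 c k else 0) =
      ∑ p ∈ star, (if P p then 1 - ∑ k, baryCoord f1 f2 f3 p k else 0) := by
    simp only [hsplit, Finset.sum_sub_distrib]
    rw [Finset.sum_comm, Finset.sum_comm (s := star)]
    congr 1
    · exact bt.sum_tri_eq_sum_star i i _ fun p q h _ => by simp only [hP p q h]
    · refine Finset.sum_congr rfl fun k _ => ?_
      exact bt.sum_tri_eq_sum_star i k _ fun p q hi hk => by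
        simp only [hP p q hi, baryCoord_congr hk]
  rw [Finset.sum_filter, htri_star, Finset.sum_eq_single_of_mem a ha fun p hp hpa => by
    simp [hsol.sum_baryCoord hp hpa]]
  simp [hsol.baryCoord_self]

theorem IsEqSolution.sum_baryCoord_eq_one_of_le (hsol : IsEqSolution star a f1 f2 f3)
    (bt : IsLatinBitrade star tri) (ha : a ∈ star) (i : Fin 3) (P : R × C × S → Prop)
    (hP : ∀ p q, coordEq p q i → (P p ↔ P q)) (hPa : ¬ P a)
    (hle : ∀ c ∈ tri, P c → ∑ k, baryCoord f1 f2 f3 c k ≤ 1) :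
    ∀ c ∈ tri, P c → ∑ k, baryCoord f1 f2 f3 c k = 1 := by
  classical
  have hsum := hsol.sum_filter_tri_one_sub_sum_baryCoord bt ha i P hP
  rw [if_neg hPa] at hsum
  intro c hc hPc
  have hzero := (Finset.sum_eq_zero_iff_of_nonneg fun c hc => sub_nonneg.2
    (hle c (Finset.mem_filter.1 hc).1 (Finset.mem_filter.1 hc).2)).1 hsum c
      (Finset.mem_filter.2 ⟨hc, hPc⟩)
  linarith

theorem IsEqSolution.exists_baryCoord_eq_one
    (hsol : IsEqSolution star a f1 f2 f3) (hb : b ∈ star) (hba : b ≠ a)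
    (hvert : (((f2 b.2.1 : ℝ), (f1 b.1 : ℝ)) : ℝ × ℝ) ∈
      ({((0 : ℝ), (0 : ℝ)), ((1 : ℝ), (0 : ℝ)), ((0 : ℝ), (1 : ℝ))} : Set (ℝ × ℝ))) :
    ∃ k, baryCoord f1 f2 f3 b k = 1 := by
  have hsum := hsol.2.2.2 b hb hba
  simp only [Set.mem_insert_iff, Set.mem_singleton_iff, Prod.mk.injEq] at hvert
  norm_cast at hvert
  rcases hvert with ⟨h2, h1⟩ | ⟨h2, -⟩ | ⟨-, h1⟩
  · exact ⟨2, by simp [baryCoord]; linarith⟩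
  · exact ⟨1, by simp [baryCoord, h2]⟩
  · exact ⟨0, by simp [baryCoord, h1]⟩

end Solutions

section Indecomposable

variable {R C S : Type*} [DecidableEq R] [DecidableEq C] [DecidableEq S]
  {star tri : Finset (R × C × S)} {a c p : R × C × S}
  {f1 : R → ℚ} {f2 : C → ℚ} {f3 : S → ℚ}

/-- Every `p̄` with `p ∈ T*` lies in `Σ`. A minimal negative coordinate `α` would make the
triples of `T*` and `T△` on which it equals `α` a proper sub-bitrade. -/
theorem IsEqSolution.baryCoord_nonneg (hsol : IsEqSolution star a f1 f2 f3)
    (bt : IsLatinBitrade star tri) (hind : BitradeIndecomposable star tri) (ha : a ∈ star)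
    (i : Fin 3) (hp : p ∈ star) : 0 ≤ baryCoord f1 f2 f3 p i := by
  by_contra! hneg
  obtain ⟨m, hm, hmin⟩ := star.exists_min_image (baryCoord f1 f2 f3 · i) ⟨p, hp⟩
  set α := baryCoord f1 f2 f3 m i
  have hα : α < 0 := (hmin p hp).trans_lt hneg
  have hαa : baryCoord f1 f2 f3 a i ≠ α := by rw [hsol.baryCoord_self]; exact hα.ne'
  set ψ := fun t => 1 - baryCoord f1 f2 f3 t (i + 1) - baryCoord f1 f2 f3 t (i + 2)
  have hrot (t : R × C × S) := Fin.sum_univ_three_rotate (baryCoord f1 f2 f3 t) i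
  have hψ (t) (ht : t ∈ star) (hta : t ≠ a) : ψ t = baryCoord f1 f2 f3 t i := by
    have := hsol.sum_baryCoord ht hta
    simp only [ψ]; linarith [hrot t]
  have hψa : ψ a = 1 := by simp [ψ, hsol.baryCoord_self]
  have hP (p q : R × C × S) (h : coordEq p q i) :
      baryCoord f1 f2 f3 p i = α ↔ baryCoord f1 f2 f3 q i = α := by rw [baryCoord_congr h]
  have hQ (p q : R × C × S) (h1 : coordEq p q (i + 1)) (h2 : coordEq p q (i + 2)) :
      ψ p = α ↔ ψ q = α := by simp only [ψ, baryCoord_congr h1, baryCoord_congr h2]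
  have hstar (t) (ht : t ∈ star) : baryCoord f1 f2 f3 t i = α ↔ ψ t = α := by
    by_cases hta : t = a
    · subst hta; rw [hψa]; constructor <;> intro h <;> [exact absurd h hαa; linarith]
    · rw [hψ t ht hta]
  have hψ_tri : ∀ c ∈ tri, α ≤ ψ c :=
    bt.forall_tri_of_forall_star (Fin.add_one_ne_add_two i)
      (fun p q h1 h2 h => by simpa only [ψ, baryCoord_congr h1, baryCoord_congr h2] using h)
      fun t ht => by
        by_cases hta : t = a
        · rw [hta, hψa]; linarith
        · rw [hψ t ht hta]; exact hmin t ht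
  have htri (c) (hc : c ∈ tri) (hci : baryCoord f1 f2 f3 c i = α) : ψ c = α := by
    have := hsol.sum_baryCoord_eq_one_of_le bt ha i _ hP hαa
      (fun c hc hci => by linarith [hrot c, hψ_tri c hc]) c hc hci
    simp only [ψ]; linarith [hrot c]
  exact hind.forall_not_of_iff bt i hP hQ hstar
    (fun c hc => ⟨htri c hc, bt.tri_imp_of_star_iff i i (i + 1) (i + 2)
      (fun p q h _ => hP p q h) hQ hstar htri c hc⟩) ha hαa m hm rfl

theorem IsEqSolution.baryCoord_add_baryCoord_le_one (hsol : IsEqSolution star a f1 f2 f3)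
    (bt : IsLatinBitrade star tri) (hind : BitradeIndecomposable star tri) (ha : a ∈ star)
    (i : Fin 3) (hc : c ∈ tri) :
    baryCoord f1 f2 f3 c (i + 1) + baryCoord f1 f2 f3 c (i + 2) ≤ 1 := by
  refine bt.forall_tri_of_forall_star (P := fun t =>
      baryCoord f1 f2 f3 t (i + 1) + baryCoord f1 f2 f3 t (i + 2) ≤ 1)
    (Fin.add_one_ne_add_two i) (fun p q h1 h2 h => by
      simpa only [baryCoord_congr h1, baryCoord_congr h2] using h) (fun p hp => ?_) c hc
  by_cases hpa : p = a
  · simp [hpa, hsol.baryCoord_self]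
  · have := hsol.sum_baryCoord hp hpa
    linarith [Fin.sum_univ_three_rotate (baryCoord f1 f2 f3 p) i,
      hsol.baryCoord_nonneg bt hind ha i hp]

theorem IsEqSolution.sum_baryCoord_eq_one_of_baryCoord_eq_zero
    (hsol : IsEqSolution star a f1 f2 f3) (bt : IsLatinBitrade star tri)
    (hind : BitradeIndecomposable star tri) (ha : a ∈ star) {i : Fin 3} (hc : c ∈ tri)
    (hci : baryCoord f1 f2 f3 c i = 0) (hca : ¬ coordEq c a i) :
    ∑ k, baryCoord f1 f2 f3 c k = 1 :=
  hsol.sum_baryCoord_eq_one_of_le bt ha i (coordEq · c i)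
    (fun _ _ h => ⟨(coordEq_comm.1 h).trans, h.trans⟩) (fun h => hca (coordEq_comm.1 h))
    (fun c' hc' h => by
      linarith [Fin.sum_univ_three_rotate (baryCoord f1 f2 f3 c') i,
        baryCoord_congr (f1 := f1) (f2 := f2) (f3 := f3) h,
        hsol.baryCoord_add_baryCoord_le_one bt hind ha i hc'])
    c hc (coordEq_refl c i)

/-- No `p̄` with `p ∈ T*` is a vertex of `Σ`: the triples of `T*` and `T△` sitting at a vertex
would form a proper sub-bitrade. -/
theorem IsEqSolution.baryCoord_ne_one (hsol : IsEqSolution star a f1 f2 f3)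
    (bt : IsLatinBitrade star tri) (hind : BitradeIndecomposable star tri) (ha : a ∈ star)
    (i : Fin 3) (hp : p ∈ star) : baryCoord f1 f2 f3 p i ≠ 1 := by
  set Q := fun t => baryCoord f1 f2 f3 t (i + 1) = 0 ∧ baryCoord f1 f2 f3 t (i + 2) = 0 ∧
    ¬ (coordEq t a (i + 1) ∧ coordEq t a (i + 2))
  have hrot (t : R × C × S) := Fin.sum_univ_three_rotate (baryCoord f1 f2 f3 t) i
  have hP (p q : R × C × S) (h : coordEq p q i) :
      baryCoord f1 f2 f3 p i = 1 ↔ baryCoord f1 f2 f3 q i = 1 := by rw [baryCoord_congr h]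
  have hQ (p q : R × C × S) (h1 : coordEq p q (i + 1)) (h2 : coordEq p q (i + 2)) :
      Q p ↔ Q q := by
    simp only [Q, baryCoord_congr h1, baryCoord_congr h2]
    exact and_congr_right' (and_congr_right' (not_congr (and_congr
      ⟨(coordEq_comm.1 h1).trans, h1.trans⟩ ⟨(coordEq_comm.1 h2).trans, h2.trans⟩)))
  have hstar (t) (ht : t ∈ star) : baryCoord f1 f2 f3 t i = 1 ↔ Q t := by
    by_cases hta : t = a
    · subst hta; simp [Q, hsol.baryCoord_self, coordEq_refl]
    have hsum := hsol.sum_baryCoord ht hta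
    have h1 := hsol.baryCoord_nonneg bt hind ha (i + 1) ht
    have h2 := hsol.baryCoord_nonneg bt hind ha (i + 2) ht
    have hna : ¬ (coordEq t a (i + 1) ∧ coordEq t a (i + 2)) := fun h =>
      hta (bt.eq_of_coordEq (Fin.add_one_ne_add_two i) ht ha h.1 h.2)
    simp only [Q, hna, not_false_eq_true, and_true]
    constructor
    · intro h; constructor <;> linarith [hrot t]
    · rintro ⟨h1, h2⟩; linarith [hrot t]
  have htri (c) (hc : c ∈ tri) (hQc : Q c) : baryCoord f1 f2 f3 c i = 1 := by
    obtain ⟨h1, h2, hna⟩ := hQc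
    have hsum : ∑ k, baryCoord f1 f2 f3 c k = 1 := by
      by_cases ha1 : coordEq c a (i + 1)
      · exact hsol.sum_baryCoord_eq_one_of_baryCoord_eq_zero bt hind ha hc h2
          fun ha2 => hna ⟨ha1, ha2⟩
      · exact hsol.sum_baryCoord_eq_one_of_baryCoord_eq_zero bt hind ha hc h1 ha1
    linarith [hrot c]
  exact hind.forall_not_of_iff bt i hP hQ hstar
    (fun c hc => ⟨bt.tri_imp_of_star_iff (i + 1) (i + 2) i i hQ (fun p q h _ => hP p q h)
      (fun p hp => (hstar p hp).symm) htri c hc, htri c hc⟩) ha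
    (by rw [hsol.baryCoord_self]; exact zero_ne_one) p hp

end Indecomposable

/-- **Lemma 2.4.** If `b ∈ T*` and `i` are such that `b_i ≠ a_i` but `b̄_i = ā_i`, then
`Δ(c,a)` degenerates for every `c ∈ T△` with `c_i = b_i`, and `b̄` is not a vertex of `Σ`. -/
theorem stmt3 (star tri : Finset (R × C × S)) (hsph : IsSphericalBitrade star tri)
    (a : R × C × S) (ha : a ∈ star)
    (f1 : R → ℚ) (f2 : C → ℚ) (f3 : S → ℚ)
    (hsol : IsEqSolution star a f1 f2 f3)
    (b : R × C × S) (hb : b ∈ star) (i : Fin 3)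
    (hne : ¬ coordEq b a i)
    (hval : coordVal f1 f2 f3 b i = coordVal f1 f2 f3 a i) :
    (∀ c ∈ tri, coordEq c b i → DeltaDegenerate (f1 c.1) (f2 c.2.1) (f3 c.2.2)) ∧
    (((f2 b.2.1 : ℝ), (f1 b.1 : ℝ)) : ℝ × ℝ) ∉
      ({((0 : ℝ), (0 : ℝ)), ((1 : ℝ), (0 : ℝ)), ((0 : ℝ), (1 : ℝ))} : Set (ℝ × ℝ)) := by
  obtain ⟨bt, hind, -⟩ := hsph
  have hba : b ≠ a := by
    rintro rfl
    exact hne (coordEq_refl b i)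
  have hbi : baryCoord f1 f2 f3 b i = 0 := by
    rw [← hsol.baryCoord_self i]
    exact baryCoord_eq_iff_coordVal_eq.2 hval
  refine ⟨fun c hc hcb => ?_, fun hvert => ?_⟩
  · rw [← sum_baryCoord_eq_one_iff]
    exact hsol.sum_baryCoord_eq_one_of_baryCoord_eq_zero bt hind ha hc
      (by rw [baryCoord_congr hcb, hbi]) fun hca => hne ((coordEq_comm.1 hcb).trans hca)
  · obtain ⟨k, hk⟩ := hsol.exists_baryCoord_eq_one hb hba hvert
    exact hsol.baryCoord_ne_one bt hind ha k hb hk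
end

section
/- Under the standing assumptions (T spherical, a ∈ T*, the solution to Eq(T,a) separated, Γ̂ ≠ ∅, and P the minimal point of the closure of Γ̂), the point P is not equal to any of the vertices A = (0,0), B = (0,1), C = (1,0) of Σ. -/
open Function Set

variable {R C S : Type*} [DecidableEq R] [DecidableEq C] [DecidableEq S]

/-- `Π`: the union of all sides of the triangles `Δ(c,a)`, `c ∈ T△`. -/
def PiSet (tri : Finset (R × C × S)) (f1 : R → ℚ) (f2 : C → ℚ) (f3 : S → ℚ) :
    Set (ℝ × ℝ) :=
  ⋃ c ∈ tri, (sideH (f1 c.1) (f2 c.2.1) (f3 c.2.2) ∪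
    sideV (f1 c.1) (f2 c.2.1) (f3 c.2.2) ∪ sideD (f1 c.1) (f2 c.2.1) (f3 c.2.2))

/-- `Γ = Int(Σ) \ Π`. -/
def GammaSet (tri : Finset (R × C × S)) (f1 : R → ℚ) (f2 : C → ℚ) (f3 : S → ℚ) :
    Set (ℝ × ℝ) :=
  interior SigmaT \ PiSet tri f1 f2 f3

/-- `π(X)`: the number of triples `c ∈ T△` such that `X` lies in the interior of `Δ(c,a)`. -/
noncomputable def piCount (tri : Finset (R × C × S))
    (f1 : R → ℚ) (f2 : C → ℚ) (f3 : S → ℚ) (X : ℝ × ℝ) : ℕ :=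
  {c : R × C × S | c ∈ tri ∧ X ∈ interior (DeltaOf f1 f2 f3 c)}.ncard

/-- `Γ̂ = {X ∈ Γ : π(X) ≠ 1}`. -/
def GammaHat (tri : Finset (R × C × S)) (f1 : R → ℚ) (f2 : C → ℚ) (f3 : S → ℚ) :
    Set (ℝ × ℝ) :=
  {X ∈ GammaSet tri f1 f2 f3 | piCount tri f1 f2 f3 X ≠ 1}

/-- The order used to choose the minimal point `P`: `(α,β)` precedes `(α',β')` iff
`α+β < α'+β'`, or `α+β = α'+β'` and `β < β'`. -/
def ptOrder (p q : ℝ × ℝ) : Prop :=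
  p.1 + p.2 < q.1 + q.2 ∨ (p.1 + p.2 = q.1 + q.2 ∧ p.2 < q.2)


/-! ### Auxiliary lemmas for `stmt4` -/

/-- Transfer a sum along a two-sided `∃!` correspondence preserving a projection. -/
lemma sum_exun {α γ : Type*} (s t : Finset α) (π : α → γ)
    (hst : ∀ p ∈ s, ∃! q, q ∈ t ∧ π q = π p)
    (hts : ∀ q ∈ t, ∃! p, p ∈ s ∧ π p = π q)
    (F : γ → ℤ) :
    ∑ p ∈ s, F (π p) = ∑ q ∈ t, F (π q) := by
  refine Finset.sum_bij' (fun p hp => ((hst p hp).exists).choose)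
    (fun q hq => ((hts q hq).exists).choose) ?_ ?_ ?_ ?_ ?_
  · intro p hp; exact ((hst p hp).exists).choose_spec.1
  · intro q hq; exact ((hts q hq).exists).choose_spec.1
  · intro p hp
    have h1 := ((hst p hp).exists).choose_spec
    have h2 := ((hts _ h1.1).exists).choose_spec
    exact (hts _ h1.1).unique h2 ⟨hp, h1.2.symm⟩
  · intro q hq
    have h1 := ((hts q hq).exists).choose_spec
    have h2 := ((hst _ h1.1).exists).choose_spec
    exact (hst _ h1.1).unique h2 ⟨hq, h1.2.symm⟩
  · intro p hp
    have h1 := ((hst p hp).exists).choose_spec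
    rw [h1.2]

lemma mem_interior_deltaT {r1 r2 r3 : ℚ} {X : ℝ × ℝ}
    (h1 : (r1 : ℝ) ≠ X.2) (h2 : (r2 : ℝ) ≠ X.1) (h3 : (r3 : ℝ) ≠ X.1 + X.2) :
    X ∈ interior (DeltaT r1 r2 r3) ↔
      (((r1 : ℝ) < X.2 ∧ (r2 : ℝ) < X.1 ∧ X.1 + X.2 < (r3 : ℝ)) ∨
       (X.2 < (r1 : ℝ) ∧ X.1 < (r2 : ℝ) ∧ (r3 : ℝ) < X.1 + X.2)) := by
  constructor
  · intro h
    rcases interior_subset h with ⟨ha, hb, hc⟩ | ⟨ha, hb, hc⟩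
    · exact Or.inl ⟨lt_of_le_of_ne ha h1, lt_of_le_of_ne hb h2,
        lt_of_le_of_ne hc (Ne.symm h3)⟩
    · exact Or.inr ⟨lt_of_le_of_ne ha (Ne.symm h1), lt_of_le_of_ne hb (Ne.symm h2),
        lt_of_le_of_ne hc h3⟩
  · intro h
    rcases h with ⟨ha, hb, hc⟩ | ⟨ha, hb, hc⟩
    · refine mem_interior.2 ⟨{p : ℝ × ℝ | (r1 : ℝ) < p.2 ∧ (r2 : ℝ) < p.1 ∧ p.1 + p.2 < (r3 : ℝ)},
        ?_, ?_, ⟨ha, hb, hc⟩⟩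
      · intro p hp; exact Or.inl ⟨hp.1.le, hp.2.1.le, hp.2.2.le⟩
      · exact ((isOpen_lt continuous_const continuous_snd).inter
          ((isOpen_lt continuous_const continuous_fst).inter
            (isOpen_lt (continuous_fst.add continuous_snd) continuous_const)))
    · refine mem_interior.2 ⟨{p : ℝ × ℝ | p.2 < (r1 : ℝ) ∧ p.1 < (r2 : ℝ) ∧ (r3 : ℝ) < p.1 + p.2},
        ?_, ?_, ⟨ha, hb, hc⟩⟩
      · intro p hp; exact Or.inr ⟨hp.1.le, hp.2.1.le, hp.2.2.le⟩
      · exact ((isOpen_lt continuous_snd continuous_const).inter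
          ((isOpen_lt continuous_fst continuous_const).inter
            (isOpen_lt continuous_const (continuous_fst.add continuous_snd))))

lemma interior_sigmaT :
    interior SigmaT = {p : ℝ × ℝ | 0 < p.1 ∧ 0 < p.2 ∧ p.1 + p.2 < 1} := by
  apply subset_antisymm
  · intro p hp
    obtain ⟨ε, hε, hball⟩ := Metric.mem_nhds_iff.1 (mem_interior_iff_mem_nhds.1 hp)
    have hmem : ∀ q : ℝ × ℝ, dist q p < ε → q ∈ SigmaT := fun q hq => hball hq
    have h1 : ((p.1 - ε/2, p.2) : ℝ × ℝ) ∈ SigmaT := by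
      apply hmem
      simp [Prod.dist_eq, Real.dist_eq, abs_of_nonneg hε.le, abs_of_nonpos]
      linarith
    have h2 : ((p.1, p.2 - ε/2) : ℝ × ℝ) ∈ SigmaT := by
      apply hmem
      simp [Prod.dist_eq, Real.dist_eq, abs_of_nonneg hε.le, abs_of_nonpos]
      linarith
    have h3 : ((p.1 + ε/2, p.2) : ℝ × ℝ) ∈ SigmaT := by
      apply hmem
      simp [Prod.dist_eq, Real.dist_eq, abs_of_nonneg hε.le]
      linarith
    obtain ⟨a1, -, -⟩ := h1
    obtain ⟨-, b2, -⟩ := h2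
    obtain ⟨-, -, c3⟩ := h3
    exact ⟨by simp at a1; linarith, by simp at b2; linarith, by simp at c3; linarith⟩
  · apply interior_maximal
    · intro p hp
      exact ⟨hp.1.le, hp.2.1.le, hp.2.2.le⟩
    · exact ((isOpen_lt continuous_const continuous_fst).inter
        ((isOpen_lt continuous_const continuous_snd).inter
          (isOpen_lt (continuous_fst.add continuous_snd) continuous_const)))

/-- The key counting fact: at a point of `Int Σ` off all the lines determined by the
values of the solution, exactly one triangle `Δ(c,a)`, `c ∈ T△`, covers the point. -/
lemma piCount_eq_one_of_generic (star tri : Finset (R × C × S))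
    (hbt : IsLatinBitrade star tri) (a : R × C × S) (ha : a ∈ star)
    (f1 : R → ℚ) (f2 : C → ℚ) (f3 : S → ℚ)
    (hsol : IsEqSolution star a f1 f2 f3) (X : ℝ × ℝ)
    (hX1 : 0 < X.1) (hX2 : 0 < X.2) (hX3 : X.1 + X.2 < 1)
    (hgen : ∀ t ∈ star ∪ tri,
      (f1 t.1 : ℝ) ≠ X.2 ∧ (f2 t.2.1 : ℝ) ≠ X.1 ∧ (f3 t.2.2 : ℝ) ≠ X.1 + X.2) :
    piCount tri f1 f2 f3 X = 1 := by
  classical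
  set U : R → ℤ := fun r => if (f1 r : ℝ) < X.2 then 1 else 0 with hUdef
  set V : C → ℤ := fun c => if (f2 c : ℝ) < X.1 then 1 else 0 with hVdef
  set W : S → ℤ := fun s => if X.1 + X.2 < (f3 s : ℝ) then 1 else 0 with hWdef
  set g : R × C × S → ℤ := fun t =>
    1 - U t.1 - V t.2.1 - W t.2.2 + U t.1 * V t.2.1 + U t.1 * W t.2.2 + V t.2.1 * W t.2.2
    with hgdef
  -- Step 1: piCount as an integer sum of g over tri
  have step1 : (piCount tri f1 f2 f3 X : ℤ) = ∑ c ∈ tri, g c := by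
    have hset : {c : R × C × S | c ∈ tri ∧ X ∈ interior (DeltaOf f1 f2 f3 c)} =
        ↑(tri.filter fun c => X ∈ interior (DeltaOf f1 f2 f3 c)) := by
      ext c; simp
    rw [piCount, hset, Set.ncard_coe_finset, Finset.card_filter]
    push_cast
    apply Finset.sum_congr rfl
    intro c hc
    obtain ⟨g1, g2, g3⟩ := hgen c (Finset.mem_union_right _ hc)
    rw [show (DeltaOf f1 f2 f3 c) = DeltaT (f1 c.1) (f2 c.2.1) (f3 c.2.2) from rfl]
    rcases g1.lt_or_gt with l1 | l1 <;> rcases g2.lt_or_gt with l2 | l2 <;>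
      rcases g3.lt_or_gt with l3 | l3
    · -- r1 < y, r2 < x, r3 < x+y : not covered
      rw [if_neg, hgdef]
      · simp only [hUdef, hVdef, hWdef, if_pos l1, if_pos l2, if_neg (not_lt_of_gt l3)]
        ring
      · rw [mem_interior_deltaT g1 g2 g3]
        rintro (⟨-, -, c3⟩ | ⟨c1, -, -⟩) <;> linarith
    · -- r1 < y, r2 < x, x+y < r3 : covered
      rw [if_pos, hgdef]
      · simp only [hUdef, hVdef, hWdef, if_pos l1, if_pos l2, if_pos l3]
        ring
      · rw [mem_interior_deltaT g1 g2 g3]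
        exact Or.inl ⟨l1, l2, l3⟩
    · rw [if_neg, hgdef]
      · simp only [hUdef, hVdef, hWdef, if_pos l1, if_neg (not_lt_of_gt l2),
          if_neg (not_lt_of_gt l3)]
        ring
      · rw [mem_interior_deltaT g1 g2 g3]
        rintro (⟨-, c2, -⟩ | ⟨c1, -, -⟩) <;> linarith
    · rw [if_neg, hgdef]
      · simp only [hUdef, hVdef, hWdef, if_pos l1, if_neg (not_lt_of_gt l2), if_pos l3]
        ring
      · rw [mem_interior_deltaT g1 g2 g3]
        rintro (⟨-, c2, -⟩ | ⟨c1, -, -⟩) <;> linarith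
    · rw [if_neg, hgdef]
      · simp only [hUdef, hVdef, hWdef, if_neg (not_lt_of_gt l1), if_pos l2,
          if_neg (not_lt_of_gt l3)]
        ring
      · rw [mem_interior_deltaT g1 g2 g3]
        rintro (⟨c1, -, -⟩ | ⟨-, c2, -⟩) <;> linarith
    · rw [if_neg, hgdef]
      · simp only [hUdef, hVdef, hWdef, if_neg (not_lt_of_gt l1), if_pos l2, if_pos l3]
        ring
      · rw [mem_interior_deltaT g1 g2 g3]
        rintro (⟨c1, -, -⟩ | ⟨-, c2, -⟩) <;> linarith
    · -- y < r1, x < r2, r3 < x+y : covered (reverse triangle)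
      rw [if_pos, hgdef]
      · simp only [hUdef, hVdef, hWdef, if_neg (not_lt_of_gt l1), if_neg (not_lt_of_gt l2),
          if_neg (not_lt_of_gt l3)]
        ring
      · rw [mem_interior_deltaT g1 g2 g3]
        exact Or.inr ⟨l1, l2, l3⟩
    · rw [if_neg, hgdef]
      · simp only [hUdef, hVdef, hWdef, if_neg (not_lt_of_gt l1), if_neg (not_lt_of_gt l2),
          if_pos l3]
        ring
      · rw [mem_interior_deltaT g1 g2 g3]
        rintro (⟨c1, -, -⟩ | ⟨-, -, c3⟩) <;> linarith
  -- Step 2: transfer the sum from tri to star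
  have step2 : ∑ c ∈ tri, g c = ∑ b ∈ star, g b := by
    have e12 : ∑ c ∈ tri, (fun p : R × C => 1 - U p.1 - V p.2 + U p.1 * V p.2)
          ((fun t : R × C × S => (t.1, t.2.1)) c)
        = ∑ b ∈ star, (fun p : R × C => 1 - U p.1 - V p.2 + U p.1 * V p.2)
          ((fun t : R × C × S => (t.1, t.2.1)) b) := by
      refine sum_exun tri star (fun t : R × C × S => (t.1, t.2.1)) ?_ ?_
        (fun p : R × C => 1 - U p.1 - V p.2 + U p.1 * V p.2)
      · intro q hq
        obtain ⟨p, ⟨hp, e1, e2⟩, hu⟩ := hbt.r3a q hq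
        exact ⟨p, ⟨hp, by simp [Prod.ext_iff, e1, e2]⟩,
          fun y hy => hu y ⟨hy.1, by simpa [Prod.ext_iff] using hy.2⟩⟩
      · intro p hp
        obtain ⟨q, ⟨hq, e1, e2⟩, hu⟩ := hbt.r2a p hp
        exact ⟨q, ⟨hq, by simp [Prod.ext_iff, e1, e2]⟩,
          fun y hy => hu y ⟨hy.1, by simpa [Prod.ext_iff] using hy.2⟩⟩
    have e13 : ∑ c ∈ tri, (fun p : R × S => U p.1 * W p.2 - W p.2)
          ((fun t : R × C × S => (t.1, t.2.2)) c)
        = ∑ b ∈ star, (fun p : R × S => U p.1 * W p.2 - W p.2)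
          ((fun t : R × C × S => (t.1, t.2.2)) b) := by
      refine sum_exun tri star (fun t : R × C × S => (t.1, t.2.2)) ?_ ?_
        (fun p : R × S => U p.1 * W p.2 - W p.2)
      · intro q hq
        obtain ⟨p, ⟨hp, e1, e2⟩, hu⟩ := hbt.r3b q hq
        exact ⟨p, ⟨hp, by simp [Prod.ext_iff, e1, e2]⟩,
          fun y hy => hu y ⟨hy.1, by simpa [Prod.ext_iff] using hy.2⟩⟩
      · intro p hp
        obtain ⟨q, ⟨hq, e1, e2⟩, hu⟩ := hbt.r2b p hp
        exact ⟨q, ⟨hq, by simp [Prod.ext_iff, e1, e2]⟩,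
          fun y hy => hu y ⟨hy.1, by simpa [Prod.ext_iff] using hy.2⟩⟩
    have e23 : ∑ c ∈ tri, (fun p : C × S => V p.1 * W p.2)
          ((fun t : R × C × S => (t.2.1, t.2.2)) c)
        = ∑ b ∈ star, (fun p : C × S => V p.1 * W p.2)
          ((fun t : R × C × S => (t.2.1, t.2.2)) b) := by
      refine sum_exun tri star (fun t : R × C × S => (t.2.1, t.2.2)) ?_ ?_
        (fun p : C × S => V p.1 * W p.2)
      · intro q hq
        obtain ⟨p, ⟨hp, e1, e2⟩, hu⟩ := hbt.r3c q hq
        exact ⟨p, ⟨hp, by simp [Prod.ext_iff, e1, e2]⟩,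
          fun y hy => hu y ⟨hy.1, by simpa [Prod.ext_iff] using hy.2⟩⟩
      · intro p hp
        obtain ⟨q, ⟨hq, e1, e2⟩, hu⟩ := hbt.r2c p hp
        exact ⟨q, ⟨hq, by simp [Prod.ext_iff, e1, e2]⟩,
          fun y hy => hu y ⟨hy.1, by simpa [Prod.ext_iff] using hy.2⟩⟩
    have split : ∀ t : R × C × S, g t =
        (fun p : R × C => 1 - U p.1 - V p.2 + U p.1 * V p.2) ((fun t : R × C × S => (t.1, t.2.1)) t)
        + (fun p : R × S => U p.1 * W p.2 - W p.2) ((fun t : R × C × S => (t.1, t.2.2)) t)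
        + (fun p : C × S => V p.1 * W p.2) ((fun t : R × C × S => (t.2.1, t.2.2)) t) := by
      intro t; simp only [hgdef]; ring
    calc ∑ c ∈ tri, g c = _ := Finset.sum_congr rfl (fun c _ => split c)
      _ = _ := by rw [Finset.sum_add_distrib, Finset.sum_add_distrib, e12, e13, e23,
            ← Finset.sum_add_distrib, ← Finset.sum_add_distrib]
      _ = ∑ b ∈ star, g b := Finset.sum_congr rfl (fun b _ => (split b).symm)
  -- Step 3: the sum over star equals 1
  have step3 : ∑ b ∈ star, g b = 1 := by
    rw [Finset.sum_eq_single_of_mem a ha]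
    · have e1 : U a.1 = 1 := by
        simp only [hUdef]
        rw [if_pos]
        rw [hsol.1]; exact_mod_cast hX2
      have e2 : V a.2.1 = 1 := by
        simp only [hVdef]
        rw [if_pos]
        rw [hsol.2.1]; exact_mod_cast hX1
      have e3 : W a.2.2 = 1 := by
        simp only [hWdef]
        rw [if_pos]
        rw [hsol.2.2.1]; exact_mod_cast hX3
      simp [hgdef, e1, e2, e3]
    · intro b hb hba
      have key : (f1 b.1 : ℝ) + (f2 b.2.1 : ℝ) = (f3 b.2.2 : ℝ) := by
        exact_mod_cast congrArg (fun q : ℚ => (q : ℝ)) (hsol.2.2.2 b hb hba)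
      have hU1 : ∀ {r : R}, (f1 r : ℝ) < X.2 → U r = 1 := fun h => if_pos h
      have hU0 : ∀ {r : R}, X.2 < (f1 r : ℝ) → U r = 0 := fun h => if_neg (not_lt_of_gt h)
      have hV1 : ∀ {c : C}, (f2 c : ℝ) < X.1 → V c = 1 := fun h => if_pos h
      have hV0 : ∀ {c : C}, X.1 < (f2 c : ℝ) → V c = 0 := fun h => if_neg (not_lt_of_gt h)
      have hW1 : ∀ {s : S}, X.1 + X.2 < (f3 s : ℝ) → W s = 1 := fun h => if_pos h
      have hW0 : ∀ {s : S}, (f3 s : ℝ) < X.1 + X.2 → W s = 0 := fun h => if_neg (not_lt_of_gt h)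
      obtain ⟨g1, g2, g3⟩ := hgen b (Finset.mem_union_left _ hb)
      rcases g1.lt_or_gt with l1 | l1 <;> rcases g2.lt_or_gt with l2 | l2 <;>
        rcases g3.lt_or_gt with l3 | l3
      · simp only [hgdef, hU1 l1, hV1 l2, hW0 l3]; norm_num
      · exfalso; linarith
      · simp only [hgdef, hU1 l1, hV0 l2, hW0 l3]; norm_num
      · simp only [hgdef, hU1 l1, hV0 l2, hW1 l3]; norm_num
      · simp only [hgdef, hU0 l1, hV1 l2, hW0 l3]; norm_num
      · simp only [hgdef, hU0 l1, hV1 l2, hW1 l3]; norm_num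
      · exfalso; linarith
      · simp only [hgdef, hU0 l1, hV0 l2, hW1 l3]; norm_num
  have : (piCount tri f1 f2 f3 X : ℤ) = 1 := by rw [step1, step2, step3]
  exact_mod_cast this

/-- **Lemma 3.1.** The minimal point `P` of the closure of `Γ̂` is not a vertex of `Σ`. -/
theorem stmt4 (star tri : Finset (R × C × S)) (hsph : IsSphericalBitrade star tri)
    (a : R × C × S) (ha : a ∈ star)
    (f1 : R → ℚ) (f2 : C → ℚ) (f3 : S → ℚ)
    (hsol : IsEqSolution star a f1 f2 f3)
    (hsep : SeparatedSolution star f1 f2 f3)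
    (hne : (GammaHat tri f1 f2 f3).Nonempty)
    (P : ℝ × ℝ)
    (hP : P ∈ closure (GammaHat tri f1 f2 f3))
    (hPmin : ∀ Q ∈ closure (GammaHat tri f1 f2 f3), Q ≠ P → ptOrder P Q) :
    P ≠ ((0 : ℝ), (0 : ℝ)) ∧ P ≠ ((0 : ℝ), (1 : ℝ)) ∧ P ≠ ((1 : ℝ), (0 : ℝ)) := by
  classical
  have hbt := hsph.1
  -- any point of Γ̂ lies in the open triangle
  have hhat_int : ∀ Q ∈ GammaHat tri f1 f2 f3, 0 < Q.1 ∧ 0 < Q.2 ∧ Q.1 + Q.2 < 1 := by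
    intro Q hQ
    have : Q ∈ interior SigmaT := hQ.1.1
    rwa [interior_sigmaT] at this
  -- ruling out B and C via minimality
  have hBC : ∀ v : ℝ × ℝ, v.1 + v.2 = 1 → P ≠ v := by
    intro v hv he
    obtain ⟨Q, hQ⟩ := hne
    have hQc : Q ∈ closure (GammaHat tri f1 f2 f3) := subset_closure hQ
    have hQi := hhat_int Q hQ
    have hQP : Q ≠ P := by
      intro e
      rw [e, he] at hQi
      linarith [hQi.2.2]
    rcases hPmin Q hQc hQP with hlt | ⟨heq, -⟩
    · rw [he, hv] at hlt; linarith [hQi.2.2]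
    · rw [he, hv] at heq; linarith [hQi.2.2]
  refine ⟨?_, hBC _ (by norm_num), hBC _ (by norm_num)⟩
  -- ruling out A = (0,0): a neighborhood of the origin misses Γ̂
  intro he
  -- the finite set of relevant real values
  set Vals : Finset ℝ :=
    ((star ∪ tri).image fun t => ((f1 t.1 : ℝ))) ∪
    ((star ∪ tri).image fun t => ((f2 t.2.1 : ℝ))) ∪
    ((star ∪ tri).image fun t => ((f3 t.2.2 : ℝ))) with hVals
  set pos : Finset ℝ := Vals.filter (fun v => 0 < v) with hpos
  set ε : ℝ := if h : pos.Nonempty then pos.min' h else 1 with hε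
  have hεpos : 0 < ε := by
    rw [hε]
    split_ifs with h
    · exact (Finset.mem_filter.1 (Finset.min'_mem pos h)).2
    · norm_num
  have hεle : ∀ v ∈ Vals, 0 < v → ε ≤ v := by
    intro v hv hv0
    have hvp : v ∈ pos := Finset.mem_filter.2 ⟨hv, hv0⟩
    rw [hε, dif_pos ⟨v, hvp⟩]
    exact Finset.min'_le _ _ hvp
  -- the small open set around the origin
  have hopen : IsOpen {p : ℝ × ℝ | p.1 + p.2 < ε} :=
    isOpen_lt (continuous_fst.add continuous_snd) continuous_const
  have hmem0 : ((0 : ℝ), (0 : ℝ)) ∈ {p : ℝ × ℝ | p.1 + p.2 < ε} := by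
    simpa using hεpos
  rw [he] at hP
  obtain ⟨X, hXo, hXhat⟩ := mem_closure_iff.1 hP _ hopen hmem0
  obtain ⟨hX1, hX2, hX3⟩ := hhat_int X hXhat
  have hXs : X.1 + X.2 < ε := hXo
  -- X is generic
  have hgen : ∀ t ∈ star ∪ tri,
      (f1 t.1 : ℝ) ≠ X.2 ∧ (f2 t.2.1 : ℝ) ≠ X.1 ∧ (f3 t.2.2 : ℝ) ≠ X.1 + X.2 := by
    intro t ht
    refine ⟨?_, ?_, ?_⟩
    · intro h
      have hv : (f1 t.1 : ℝ) ∈ Vals := by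
        rw [hVals]
        exact Finset.mem_union_left _ (Finset.mem_union_left _
          (Finset.mem_image_of_mem _ ht))
      have := hεle _ hv (by rw [h]; exact hX2)
      rw [h] at this; linarith
    · intro h
      have hv : (f2 t.2.1 : ℝ) ∈ Vals := by
        rw [hVals]
        exact Finset.mem_union_left _ (Finset.mem_union_right _
          (Finset.mem_image_of_mem _ ht))
      have := hεle _ hv (by rw [h]; exact hX1)
      rw [h] at this; linarith
    · intro h
      have hv : (f3 t.2.2 : ℝ) ∈ Vals := by
        rw [hVals]
        exact Finset.mem_union_right _ (Finset.mem_image_of_mem _ ht)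
      have := hεle _ hv (by rw [h]; positivity)
      rw [h] at this; linarith
  have := piCount_eq_one_of_generic star tri hbt a ha f1 f2 f3 hsol X hX1 hX2 hX3 hgen
  exact hXhat.2 this
end
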